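/- arXiv:1309.7210 — 7 statements merged into one kernel-verified Lean document; each statement's English description precedes it below -/
import Mathlib

section
/- Fix μ ∈ ℝ, σ > 0, r > 0, λ ≥ 0 with μ < r + λ, and K > 0. Set p = 1/2 − μ/σ², β = p + √(p² + 2(r+λ)/σ²), α = p − √(p² + 2(r+λ)/σ²), B = β − α, m'(y) = (2/σ²) y^{2μ/σ² − 2}, x̂ = βK/(β−1), and σ̃(y) = ((r+λ−μ)y − K(r+λ)) for y ≥ x̂ and σ̃(y) = 0 for 0 < y < x̂. Then all the integrals below converge and for every x > 0: B^{-1}[ x^{α} ∫₀^x y^{β} σ̃(y) m'(y) dy + x^{β} ∫_x^∞ y^{α} σ̃(y) m'(y) dy ] equals x − K if x ≥ x̂, and equals ((x̂ − K)/x̂^{β}) x^{β} if 0 < x ≤ x̂. -/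
/-! Vieta's relations for the roots `α, β` of `z ^ 2 - 2 p z - 2 (r + λ) / σ ^ 2` make both
integrands exact derivatives on the stopping region `[x̂, ∞)`: with
`P e γ y = y ^ (-e) ((γ - 1) y - γ K)` (`greenPrimitive`), `y ^ β σ̃ m' = (P α β)'` and
`y ^ α σ̃ m' = (P β α)'`. The first primitive vanishes at `x̂` (smooth fit `(β - 1) x̂ = β K`), the
second at `∞` (since `β > 1`), and `x ^ e P e γ x = (γ - 1) x - γ K`. Above `x̂` the resolvent is
therefore `B⁻¹ [((β - 1) x - β K) - ((α - 1) x - α K)] = x - K`; below `x̂` only the tail integral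
from `x̂` survives. -/

open Real Set MeasureTheory Filter Topology

lemma sqrt_sq_add_pos {p q : ℝ} (h : 1 - 2 * p < q) : 0 < √(p ^ 2 + q) :=
  sqrt_pos.2 (by nlinarith [sq_nonneg (p - 1)])

lemma one_lt_add_sqrt_sq_add {p q : ℝ} (h : 1 - 2 * p < q) : 1 < p + √(p ^ 2 + q) := by
  rcases lt_or_ge (1 - p) 0 with hp | hp
  · linarith [sqrt_nonneg (p ^ 2 + q)]
  · have : 1 - p < √(p ^ 2 + q) := (lt_sqrt hp).2 (by nlinarith)
    linarith

lemma sub_sqrt_mul_add_sqrt {p q : ℝ} (h : 0 ≤ p ^ 2 + q) :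
    (p - √(p ^ 2 + q)) * (p + √(p ^ 2 + q)) = -q := by
  linear_combination -sq_sqrt h

noncomputable def greenPrimitive (e γ K y : ℝ) : ℝ := y ^ (-e) * ((γ - 1) * y - γ * K)

noncomputable def greenDensity (e γ K y : ℝ) : ℝ :=
  (1 - e) * (γ - 1) * y ^ (-e) + e * γ * K * y ^ (-e - 1)

lemma setIntegral_Ioi_indicator_Ici (f : ℝ → ℝ) (a x : ℝ) :
    ∫ y in Ioi x, (Ici a).indicator f y = ∫ y in Ioi (max a x), f y := by
  rw [integral_indicator measurableSet_Ici, Measure.restrict_restrict measurableSet_Ici,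
    ← Ioi_inter_Ioi]
  exact setIntegral_congr_set (Ioi_ae_eq_Ici.symm.inter EventuallyEq.rfl)

lemma setIntegral_Ioo_indicator_Ici (f : ℝ → ℝ) {a : ℝ} (ha : 0 < a) (x : ℝ) :
    ∫ y in Ioo 0 x, (Ici a).indicator f y = ∫ y in Ioc a (max a x), f y := by
  rw [integral_indicator measurableSet_Ici, Measure.restrict_restrict measurableSet_Ici]
  have hset : Ici a ∩ Ioo 0 x = Ico a x := by
    ext y
    simp only [mem_inter_iff, mem_Ici, mem_Ioo, mem_Ico]
    exact ⟨fun h => ⟨h.1, h.2.2⟩, fun h => ⟨h.1, ha.trans_le h.1, h.2⟩⟩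
  rw [hset, integral_Ico_eq_integral_Ioo, ← integral_Ioc_eq_integral_Ioo]
  rcases le_total a x with h | h
  · rw [max_eq_right h]
  · rw [max_eq_left h, Ioc_self, Ioc_eq_empty (not_lt.2 h)]

section Green

variable {e γ K : ℝ}

lemma hasDerivAt_greenPrimitive {y : ℝ} (hy : 0 < y) :
    HasDerivAt (greenPrimitive e γ K) (greenDensity e γ K y) y := by
  have hpow : HasDerivAt (fun y : ℝ => y ^ (-e)) (-e * y ^ (-e - 1)) y :=
    hasDerivAt_rpow_const (Or.inl hy.ne')
  have hlin : HasDerivAt (fun y : ℝ => (γ - 1) * y - γ * K) (γ - 1) y := by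
    simpa using ((hasDerivAt_id y).const_mul (γ - 1)).sub_const (γ * K)
  refine (hpow.mul hlin).congr_deriv ?_
  rw [greenDensity, rpow_sub_one hy.ne']
  field_simp
  ring

lemma continuousOn_greenDensity : ContinuousOn (greenDensity e γ K) (Ioi 0) := by
  have hpow (s : ℝ) : ContinuousOn (fun y : ℝ => y ^ s) (Ioi 0) :=
    continuousOn_id.rpow_const fun y hy => Or.inl (ne_of_gt hy)
  exact (continuousOn_const.mul (hpow _)).add (continuousOn_const.mul (hpow _))

lemma rpow_mul_greenPrimitive {x : ℝ} (hx : 0 < x) :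
    x ^ e * greenPrimitive e γ K x = (γ - 1) * x - γ * K := by
  rw [greenPrimitive, ← mul_assoc, ← rpow_add hx, add_neg_cancel, rpow_zero, one_mul]

lemma tendsto_greenPrimitive_atTop (he : 1 < e) :
    Tendsto (greenPrimitive e γ K) atTop (𝓝 0) := by
  have h1 := (tendsto_rpow_neg_atTop (by linarith : 0 < e - 1)).const_mul (γ - 1)
  have h2 := (tendsto_rpow_neg_atTop (by linarith : 0 < e)).const_mul (γ * K)
  have h := h1.sub h2
  rw [mul_zero, mul_zero, sub_zero] at h
  refine h.congr' ?_
  filter_upwards [eventually_gt_atTop 0] with y hy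
  rw [greenPrimitive, show -(e - 1) = -e + 1 by ring, rpow_add_one hy.ne']
  ring

lemma integrableOn_Ioi_greenDensity {c : ℝ} (hc : 0 < c) (he : 1 < e) :
    IntegrableOn (greenDensity e γ K) (Ioi c) :=
  ((integrableOn_Ioi_rpow_of_lt (by linarith) hc).const_mul _).add
    ((integrableOn_Ioi_rpow_of_lt (by linarith) hc).const_mul _)

lemma integral_Ioi_greenDensity {c : ℝ} (hc : 0 < c) (he : 1 < e) :
    ∫ y in Ioi c, greenDensity e γ K y = -greenPrimitive e γ K c := by
  rw [integral_Ioi_of_hasDerivAt_of_tendsto'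
    (fun y hy => hasDerivAt_greenPrimitive (hc.trans_le hy))
    (integrableOn_Ioi_greenDensity hc he) (tendsto_greenPrimitive_atTop he), zero_sub]

lemma integral_greenDensity {a b : ℝ} (ha : 0 < a) (hab : a ≤ b) :
    ∫ y in a..b, greenDensity e γ K y = greenPrimitive e γ K b - greenPrimitive e γ K a := by
  have hpos : ∀ y ∈ uIcc a b, 0 < y := fun y hy =>
    ha.trans_le (uIcc_of_le hab ▸ hy).1
  exact intervalIntegral.integral_eq_sub_of_hasDerivAt
    (fun y hy => hasDerivAt_greenPrimitive (hpos y hy))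
    ((continuousOn_greenDensity.mono fun y hy => hpos y hy).intervalIntegrable)

lemma integral_Ioo_indicator_greenDensity {a : ℝ} (ha : 0 < a) (x : ℝ) :
    ∫ y in Ioo 0 x, (Ici a).indicator (greenDensity e γ K) y
      = greenPrimitive e γ K (max a x) - greenPrimitive e γ K a := by
  rw [setIntegral_Ioo_indicator_Ici _ ha, ← intervalIntegral.integral_of_le (le_max_left a x),
    integral_greenDensity ha (le_max_left a x)]

lemma integral_Ioi_indicator_greenDensity {a : ℝ} (ha : 0 < a) (he : 1 < e) (x : ℝ) :
    ∫ y in Ioi x, (Ici a).indicator (greenDensity e γ K) y = -greenPrimitive e γ K (max a x) := by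
  rw [setIntegral_Ioi_indicator_Ici, integral_Ioi_greenDensity (lt_max_of_lt_left ha) he]

lemma integrableOn_Ioo_indicator_greenDensity {a : ℝ} (ha : 0 < a) (x : ℝ) :
    IntegrableOn ((Ici a).indicator (greenDensity e γ K)) (Ioo 0 x) := by
  rw [IntegrableOn, integrable_indicator_iff measurableSet_Ici, IntegrableOn,
    Measure.restrict_restrict measurableSet_Ici]
  exact ((continuousOn_greenDensity.mono fun y hy => ha.trans_le hy.1).integrableOn_Icc
    (b := max a x)).mono_set fun y hy => ⟨hy.1, le_max_of_le_right hy.2.2.le⟩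

lemma integrableOn_Ioi_indicator_greenDensity {a : ℝ} (ha : 0 < a) (he : 1 < e) (x : ℝ) :
    IntegrableOn ((Ici a).indicator (greenDensity e γ K)) (Ioi x) :=
  (((integrableOn_Ici_iff_integrableOn_Ioi).2 (integrableOn_Ioi_greenDensity ha he))
    |>.integrable_indicator measurableSet_Ici).integrableOn

end Green

lemma rpow_mul_linear_mul_speedDensity {μ σ ρ K e γ y : ℝ} (hy : 0 < y)
    (hsum : 2 * μ / σ ^ 2 = 1 - (e + γ)) (hprod : 2 * ρ / σ ^ 2 = -(e * γ)) :
    y ^ γ * ((ρ - μ) * y - K * ρ) * (2 / σ ^ 2 * y ^ (2 * μ / σ ^ 2 - 2))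
      = greenDensity e γ K y := by
  have hpow : y ^ γ * y ^ (2 * μ / σ ^ 2 - 2) = y ^ (-e - 1) := by
    rw [← rpow_add hy, hsum]; congr 1; ring
  have hpow' : y ^ (-e - 1) * y = y ^ (-e) := by
    rw [← rpow_add_one hy.ne']; congr 1; ring
  calc _ = 2 * (ρ - μ) / σ ^ 2 * (y ^ γ * y ^ (2 * μ / σ ^ 2 - 2) * y)
        - 2 * ρ / σ ^ 2 * K * (y ^ γ * y ^ (2 * μ / σ ^ 2 - 2)) := by ring
    _ = greenDensity e γ K y := by
      rw [hpow, hpow', greenDensity]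
      linear_combination (hprod - hsum) * y ^ (-e) - K * y ^ (-e - 1) * hprod

lemma rpow_mul_ite_mul_speedDensity_eq_indicator {μ σ ρ K a e γ : ℝ} (ha : 0 < a)
    (hsum : 2 * μ / σ ^ 2 = 1 - (e + γ)) (hprod : 2 * ρ / σ ^ 2 = -(e * γ)) :
    (fun y => y ^ γ * (if a ≤ y then (ρ - μ) * y - K * ρ else 0)
        * (2 / σ ^ 2 * y ^ (2 * μ / σ ^ 2 - 2)))
      = (Ici a).indicator (greenDensity e γ K) := by
  funext y
  by_cases hy : a ≤ y
  · rw [if_pos hy, indicator_of_mem (mem_Ici.2 hy),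
      rpow_mul_linear_mul_speedDensity (ha.trans_le hy) hsum hprod]
  · rw [if_neg hy, indicator_of_notMem (mt mem_Ici.1 hy), mul_zero, zero_mul]

theorem call_value_riesz_representation_general
    (μ σ r lam K : ℝ) (hσ : 0 < σ) (hμ : μ < r + lam) (hK : 0 < K)
    (p β α B : ℝ)
    (hp : p = 1 / 2 - μ / σ ^ 2)
    (hβ : β = p + Real.sqrt (p ^ 2 + 2 * (r + lam) / σ ^ 2))
    (hα : α = p - Real.sqrt (p ^ 2 + 2 * (r + lam) / σ ^ 2))
    (hB : B = β - α)
    (m' : ℝ → ℝ) (hm : ∀ y : ℝ, m' y = 2 / σ ^ 2 * y ^ (2 * μ / σ ^ 2 - 2))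
    (xhat : ℝ) (hxhat : xhat = β * K / (β - 1))
    (st : ℝ → ℝ)
    (hst : ∀ y : ℝ, st y = if xhat ≤ y then (r + lam - μ) * y - K * (r + lam) else 0) :
    ∀ x : ℝ, 0 < x →
      IntegrableOn (fun y => y ^ β * st y * m' y) (Set.Ioo 0 x)
      ∧ IntegrableOn (fun y => y ^ α * st y * m' y) (Set.Ioi x)
      ∧ (xhat ≤ x →
          B⁻¹ * (x ^ α * (∫ y in Set.Ioo (0 : ℝ) x, y ^ β * st y * m' y)
              + x ^ β * (∫ y in Set.Ioi x, y ^ α * st y * m' y))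
            = x - K)
      ∧ (x ≤ xhat →
          B⁻¹ * (x ^ α * (∫ y in Set.Ioo (0 : ℝ) x, y ^ β * st y * m' y)
              + x ^ β * (∫ y in Set.Ioi x, y ^ α * st y * m' y))
            = (xhat - K) / xhat ^ β * x ^ β) := by
  have hq : 1 - 2 * p < 2 * (r + lam) / σ ^ 2 := calc
    1 - 2 * p = 2 * μ / σ ^ 2 := by rw [hp]; ring
    _ < 2 * (r + lam) / σ ^ 2 := by gcongr
  have hβ1 : 1 < β := hβ ▸ one_lt_add_sqrt_sq_add hq
  have hB0 : B ≠ 0 := by rw [hB, hβ, hα]; linarith [sqrt_sq_add_pos hq]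
  have hsum : 2 * μ / σ ^ 2 = 1 - (α + β) := by rw [hα, hβ, hp]; ring
  have hprod : 2 * (r + lam) / σ ^ 2 = -(α * β) := by
    rw [hα, hβ, sub_sqrt_mul_add_sqrt (by nlinarith [sq_nonneg (p - 1)]), neg_neg]
  have hfit : (β - 1) * xhat = β * K := by rw [hxhat]; field_simp [(sub_pos.2 hβ1).ne']
  have hxhat0 : 0 < xhat := by rw [hxhat]; exact div_pos (by positivity) (by linarith)
  have hlow : (fun y => y ^ β * st y * m' y) = (Ici xhat).indicator (greenDensity α β K) := by
    simp only [hst, hm]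
    exact rpow_mul_ite_mul_speedDensity_eq_indicator hxhat0 hsum hprod
  have hup : (fun y => y ^ α * st y * m' y) = (Ici xhat).indicator (greenDensity β α K) := by
    simp only [hst, hm]
    exact rpow_mul_ite_mul_speedDensity_eq_indicator hxhat0 (by rw [hsum, add_comm])
      (by rw [hprod, mul_comm])
  intro x hx
  rw [hlow, hup, integral_Ioo_indicator_greenDensity hxhat0,
    integral_Ioi_indicator_greenDensity hxhat0 hβ1]
  refine ⟨integrableOn_Ioo_indicator_greenDensity hxhat0 x,
    integrableOn_Ioi_indicator_greenDensity hxhat0 hβ1 x, fun hxx => ?_, fun hxx => ?_⟩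
  · have hfit0 : greenPrimitive α β K xhat = 0 := by rw [greenPrimitive, hfit, sub_self, mul_zero]
    rw [max_eq_right hxx, hfit0, sub_zero, mul_neg, rpow_mul_greenPrimitive hx,
      rpow_mul_greenPrimitive hx]
    field_simp
    rw [hB]; ring
  · have hfit' : (α - 1) * xhat - α * K = -(B * (xhat - K)) := by
      rw [hB]; linear_combination hfit
    rw [max_eq_left hxx, sub_self, mul_zero, zero_add, greenPrimitive, hfit', rpow_neg hxhat0.le]
    field_simp

/-- Riesz representation `V̂ = R_{r+λ}σ̃` of the perpetual American call value for geometric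
Brownian motion: the Green-kernel resolvent at rate `r+λ` of the density
`σ̃(y) = (r+λ−μ)y − K(r+λ)` on `[x̂,∞)` (and `0` below `x̂`) equals `x − K` above the
threshold `x̂ = βK/(β−1)` and `((x̂−K)/x̂^β) x^β` below it. -/
theorem call_value_riesz_representation
    (μ σ r lam K : ℝ) (hσ : 0 < σ) (hr : 0 < r) (hlam : 0 ≤ lam)
    (hμ : μ < r + lam) (hK : 0 < K)
    (p β α B : ℝ)
    (hp : p = 1 / 2 - μ / σ ^ 2)
    (hβ : β = p + Real.sqrt (p ^ 2 + 2 * (r + lam) / σ ^ 2))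
    (hα : α = p - Real.sqrt (p ^ 2 + 2 * (r + lam) / σ ^ 2))
    (hB : B = β - α)
    (m' : ℝ → ℝ) (hm : ∀ y : ℝ, m' y = 2 / σ ^ 2 * y ^ (2 * μ / σ ^ 2 - 2))
    (xhat : ℝ) (hxhat : xhat = β * K / (β - 1))
    (st : ℝ → ℝ)
    (hst : ∀ y : ℝ, st y = if xhat ≤ y then (r + lam - μ) * y - K * (r + lam) else 0) :
    ∀ x : ℝ, 0 < x →
      IntegrableOn (fun y => y ^ β * st y * m' y) (Set.Ioo 0 x)
      ∧ IntegrableOn (fun y => y ^ α * st y * m' y) (Set.Ioi x)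
      ∧ (xhat ≤ x →
          B⁻¹ * (x ^ α * (∫ y in Set.Ioo (0 : ℝ) x, y ^ β * st y * m' y)
              + x ^ β * (∫ y in Set.Ioi x, y ^ α * st y * m' y))
            = x - K)
      ∧ (x ≤ xhat →
          B⁻¹ * (x ^ α * (∫ y in Set.Ioo (0 : ℝ) x, y ^ β * st y * m' y)
              + x ^ β * (∫ y in Set.Ioi x, y ^ α * st y * m' y))
            = (xhat - K) / xhat ^ β * x ^ β) :=
  call_value_riesz_representation_general μ σ r lam K hσ hμ hK p β α B hp hβ hα hB m' hm xhat hxhat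
    st hst
end

section
/- Fix μ ∈ ℝ, σ > 0, r > 0 and λ > 0 with μ < r, and K > 0. Set p = 1/2 − μ/σ², b = p + √(p² + 2r/σ²), a = p − √(p² + 2r/σ²), B_r = b − a, β = p + √(p² + 2(r+λ)/σ²), m'(y) = (2/σ²) y^{2μ/σ² − 2}, x̂ = βK/(β−1), and σ̃(y) = ((r+λ−μ)y − K(r+λ)) for y ≥ x̂, σ̃(y) = 0 for 0 < y < x̂. Then all the integrals below converge and: (i) for every x ≥ x̂, B_r^{-1}[ x^{a} ∫₀^x y^{b} σ̃(y) m'(y) dy + x^{b} ∫_x^∞ y^{a} σ̃(y) m'(y) dy ] = ((r+λ−μ)/(r−μ)) x − (K(r+λ)/r) + c₃ x^{a}, where c₃ = −B_r^{-1} ∫₀^{x̂} y^{b} ((r+λ−μ)y − K(r+λ)) m'(y) dy; and (ii) for every 0 < x ≤ x̂, B_r^{-1}[ x^{a} ∫₀^x y^{b} σ̃(y) m'(y) dy + x^{b} ∫_x^∞ y^{a} σ̃(y) m'(y) dy ] = c₄ x^{b}, where c₄ = B_r^{-1} ∫_{x̂}^∞ y^{a} ((r+λ−μ)y − K(r+λ))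 m'(y) dy. -/
open Real Set MeasureTheory

/-!
Since `a + b = 2p`, the speed density is `m'(y) = (2/σ²) y^{-(a+b)-1}`, so the Green kernel sends a
power `y^k` with `a < k < b` to `(2/σ²) x^k / ((k - a)(b - k))`, where
`(k - a)(b - k) σ²/2 = r - μk - σ²k(k-1)/2`. For `k = 1` and `k = 0` this is `r - μ` and `r`, so the
resolvent of the untruncated payoff `(r+λ-μ)y - K(r+λ)` is `(r+λ-μ)x/(r-μ) - K(r+λ)/r`.
Truncating the payoff below `x̂` removes, for `x ≥ x̂`, the part of the lower integral over
`(0, x̂)`, which is the `c₃ x^a` term; for `x ≤ x̂` it kills the lower integral and leaves the upper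
one over `(x̂, ∞)`.
-/

lemma sub_sqrt_mul_add_sqrt_sub {p c : ℝ} (k : ℝ) (h : 0 ≤ p ^ 2 + c) :
    (k - (p - √(p ^ 2 + c))) * (p + √(p ^ 2 + c) - k) = c + 2 * p * k - k ^ 2 := by
  linear_combination Real.sq_sqrt h

lemma mem_Ioo_sub_sqrt_add_sqrt {p c k : ℝ} (h : 0 < c + 2 * p * k - k ^ 2) :
    k ∈ Ioo (p - √(p ^ 2 + c)) (p + √(p ^ 2 + c)) := by
  have hk : |k - p| < √(p ^ 2 + c) := (Real.lt_sqrt (abs_nonneg _)).2 (by rw [sq_abs]; linarith)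
  rw [abs_sub_lt_iff] at hk
  constructor <;> linarith

section GeometricBrownianRoots

variable {μ σ ρ p : ℝ} (hσ : 0 < σ) (hp : p = 1 / 2 - μ / σ ^ 2)
include hσ hp

lemma mem_Ioo_gbm_roots {k : ℝ} (hk : μ * k + σ ^ 2 * k * (k - 1) / 2 < ρ) :
    k ∈ Ioo (p - √(p ^ 2 + 2 * ρ / σ ^ 2)) (p + √(p ^ 2 + 2 * ρ / σ ^ 2)) := by
  apply mem_Ioo_sub_sqrt_add_sqrt
  have h : 2 * ρ / σ ^ 2 + 2 * p * k - k ^ 2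
      = 2 * (ρ - μ * k - σ ^ 2 * k * (k - 1) / 2) / σ ^ 2 := by
    rw [hp]
    field_simp
    ring
  rw [h]
  exact div_pos (by linarith) (by positivity)

lemma gbm_roots_sub_mul_sub (hρ : 0 ≤ ρ) (k : ℝ) :
    (k - (p - √(p ^ 2 + 2 * ρ / σ ^ 2))) * (p + √(p ^ 2 + 2 * ρ / σ ^ 2) - k)
      = 2 * (ρ - μ * k - σ ^ 2 * k * (k - 1) / 2) / σ ^ 2 := by
  rw [sub_sqrt_mul_add_sqrt_sub k (by positivity), hp]
  field_simp
  ring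

end GeometricBrownianRoots

lemma integrableOn_Ioo_zero_rpow {t : ℝ} (ht : -1 < t) (x : ℝ) :
    IntegrableOn (fun y : ℝ => y ^ t) (Ioo 0 x) :=
  (intervalIntegral.intervalIntegrable_rpow' ht).1.mono_set Ioo_subset_Ioc_self

lemma integral_Ioo_zero_rpow {t x : ℝ} (ht : -1 < t) (hx : 0 ≤ x) :
    ∫ y in Ioo 0 x, y ^ t = x ^ (t + 1) / (t + 1) := by
  rw [← integral_Ioc_eq_integral_Ioo, ← intervalIntegral.integral_of_le hx,
    integral_rpow (Or.inl ht), zero_rpow (by linarith), sub_zero]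

/-- The resolvent `(G_ρ f)(x)` with `a = a_ρ`, `b = b_ρ` and speed density `m`. -/
noncomputable def greenResolvent (a b : ℝ) (m f : ℝ → ℝ) (x : ℝ) : ℝ :=
  (b - a)⁻¹ *
    (x ^ a * (∫ y in Ioo 0 x, y ^ b * f y * m y) + x ^ b * ∫ y in Ioi x, y ^ a * f y * m y)

section GreenResolvent

variable {a b : ℝ} {m f g : ℝ → ℝ} {x : ℝ}

lemma rpow_mul_sub_mul_mul (s α κ : ℝ) :
    (fun y : ℝ => y ^ s * (α * f y - κ * g y) * m y)
      = fun y => α * (y ^ s * f y * m y) - κ * (y ^ s * g y * m y) := by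
  funext y
  ring

lemma integrableOn_rpow_mul_sub_mul_mul {s : ℝ} {S : Set ℝ}
    (hf : IntegrableOn (fun y => y ^ s * f y * m y) S)
    (hg : IntegrableOn (fun y => y ^ s * g y * m y) S) (α κ : ℝ) :
    IntegrableOn (fun y => y ^ s * (α * f y - κ * g y) * m y) S := by
  rw [rpow_mul_sub_mul_mul]
  exact (hf.const_mul α).sub (hg.const_mul κ)

lemma greenResolvent_sub_mul
    (hfb : IntegrableOn (fun y => y ^ b * f y * m y) (Ioo 0 x))
    (hgb : IntegrableOn (fun y => y ^ b * g y * m y) (Ioo 0 x))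
    (hfa : IntegrableOn (fun y => y ^ a * f y * m y) (Ioi x))
    (hga : IntegrableOn (fun y => y ^ a * g y * m y) (Ioi x)) (α κ : ℝ) :
    greenResolvent a b m (fun y => α * f y - κ * g y) x
      = α * greenResolvent a b m f x - κ * greenResolvent a b m g x := by
  simp only [greenResolvent, rpow_mul_sub_mul_mul]
  rw [integral_sub (hfb.const_mul α) (hgb.const_mul κ),
    integral_sub (hfa.const_mul α) (hga.const_mul κ)]
  simp only [integral_const_mul]
  ring

lemma rpow_mul_indicator_mul (s : ℝ) (t : Set ℝ) :
    (fun y => y ^ s * t.indicator g y * m y) = t.indicator (fun y => y ^ s * g y * m y) := by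
  funext y
  by_cases hy : y ∈ t <;> simp [hy]

lemma greenResolvent_indicator_Ici_of_le {x₀ : ℝ} (h : x₀ ≤ x)
    (hg : IntegrableOn (fun y => y ^ b * g y * m y) (Ioo 0 x)) :
    greenResolvent a b m ((Ici x₀).indicator g) x
      = greenResolvent a b m g x - (b - a)⁻¹ * (∫ y in Ioo 0 x₀, y ^ b * g y * m y) * x ^ a := by
  have hlower : Ioo 0 x ∩ Ici x₀ = Ioo 0 x \ Ioo 0 x₀ := by
    ext y
    simp only [mem_inter_iff, mem_Ioo, mem_Ici, mem_sdiff, not_and, not_lt]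
    grind
  have hupper : Ioi x ∩ Ici x₀ = Ioi x := inter_eq_left.2 fun y hy => h.trans hy.out.le
  simp only [greenResolvent, rpow_mul_indicator_mul]
  rw [setIntegral_indicator measurableSet_Ici, setIntegral_indicator measurableSet_Ici, hlower,
    hupper, setIntegral_sdiff measurableSet_Ioo hg (Ioo_subset_Ioo_right h)]
  ring

lemma greenResolvent_indicator_Ici_of_ge {x₀ : ℝ} (h : x ≤ x₀) :
    greenResolvent a b m ((Ici x₀).indicator g) x
      = (b - a)⁻¹ * (∫ y in Ioi x₀, y ^ a * g y * m y) * x ^ b := by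
  have hlower : Ioo 0 x ∩ Ici x₀ = ∅ := by
    ext y
    simp only [mem_inter_iff, mem_Ioo, mem_Ici, mem_empty_iff_false, iff_false]
    grind
  have hupper : (Ioi x ∩ Ici x₀ : Set ℝ) =ᵐ[volume] Ioi x₀ := by
    have : Ioi x ∩ Ioi x₀ = Ioi x₀ := inter_eq_right.2 (Ioi_subset_Ioi h)
    exact this ▸ (ae_eq_refl _).inter Ioi_ae_eq_Ici.symm
  simp only [greenResolvent, rpow_mul_indicator_mul]
  rw [setIntegral_indicator measurableSet_Ici, setIntegral_indicator measurableSet_Ici, hlower,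
    setIntegral_congr_set hupper, Measure.restrict_empty, integral_zero_measure]
  ring

end GreenResolvent

section PowerSpeedDensity

variable {a b c : ℝ} {m : ℝ → ℝ} (hm : ∀ y, m y = c * y ^ (-(a + b) - 1))
include hm

lemma rpow_mul_rpow_mul_speed {y : ℝ} (hy : 0 < y) (s k : ℝ) :
    y ^ s * y ^ k * m y = c * y ^ (s + k - (a + b) - 1) := by
  rw [hm, ← rpow_add hy, mul_left_comm, ← rpow_add hy]
  ring_nf

lemma integrableOn_Ioo_rpow_mul_rpow_mul {k : ℝ} (hk : a < k) (x : ℝ) :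
    IntegrableOn (fun y => y ^ b * y ^ k * m y) (Ioo 0 x) :=
  IntegrableOn.congr_fun
    ((integrableOn_Ioo_zero_rpow (t := k - a - 1) (by linarith) x).const_mul c)
    (fun y hy => by rw [rpow_mul_rpow_mul_speed hm hy.1]; ring_nf) measurableSet_Ioo

lemma integral_Ioo_rpow_mul_rpow_mul {k x : ℝ} (hk : a < k) (hx : 0 ≤ x) :
    ∫ y in Ioo 0 x, y ^ b * y ^ k * m y = c * x ^ (k - a) / (k - a) := by
  rw [setIntegral_congr_fun measurableSet_Ioo fun y hy => rpow_mul_rpow_mul_speed hm hy.1 b k,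
    integral_const_mul, show b + k - (a + b) - 1 = k - a - 1 by ring,
    integral_Ioo_zero_rpow (by linarith) hx, sub_add_cancel, mul_div_assoc]

lemma integrableOn_Ioi_rpow_mul_rpow_mul {k x : ℝ} (hk : k < b) (hx : 0 < x) :
    IntegrableOn (fun y => y ^ a * y ^ k * m y) (Ioi x) :=
  IntegrableOn.congr_fun
    ((integrableOn_Ioi_rpow_of_lt (a := k - b - 1) (by linarith) hx).const_mul c)
    (fun y hy => by rw [rpow_mul_rpow_mul_speed hm (hx.trans hy)]; ring_nf) measurableSet_Ioi

lemma integral_Ioi_rpow_mul_rpow_mul {k x : ℝ} (hk : k < b) (hx : 0 < x) :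
    ∫ y in Ioi x, y ^ a * y ^ k * m y = c * x ^ (k - b) / (b - k) := by
  rw [setIntegral_congr_fun measurableSet_Ioi
      fun y hy => rpow_mul_rpow_mul_speed hm (hx.trans hy) a k,
    integral_const_mul, show a + k - (a + b) - 1 = k - b - 1 by ring,
    integral_Ioi_rpow_of_lt (by linarith) hx, sub_add_cancel, neg_div, ← div_neg, neg_sub,
    mul_div_assoc]

lemma greenResolvent_rpow {k x : ℝ} (hak : a < k) (hkb : k < b) (hx : 0 < x) :
    greenResolvent a b m (fun y => y ^ k) x = c * x ^ k / ((k - a) * (b - k)) := by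
  have hxa : x ^ a * x ^ (k - a) = x ^ k := by rw [← rpow_add hx, add_sub_cancel]
  have hxb : x ^ b * x ^ (k - b) = x ^ k := by rw [← rpow_add hx, add_sub_cancel]
  have hka : k - a ≠ 0 := by linarith
  have hbk : b - k ≠ 0 := by linarith
  have hba : b - a ≠ 0 := by linarith
  calc greenResolvent a b m (fun y => y ^ k) x
      = (b - a)⁻¹ *
          (c * (x ^ a * x ^ (k - a)) / (k - a) + c * (x ^ b * x ^ (k - b)) / (b - k)) := by
        rw [greenResolvent, integral_Ioo_rpow_mul_rpow_mul hm hak hx.le,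
          integral_Ioi_rpow_mul_rpow_mul hm hkb hx]
        ring
    _ = c * x ^ k / ((k - a) * (b - k)) := by
        rw [hxa, hxb]
        field_simp
        ring

lemma integrableOn_Ioo_rpow_mul_affine_mul (ha : a < 0) (α κ x : ℝ) :
    IntegrableOn (fun y => y ^ b * (α * y - κ) * m y) (Ioo 0 x) := by
  simpa using integrableOn_rpow_mul_sub_mul_mul
    (integrableOn_Ioo_rpow_mul_rpow_mul hm (k := 1) (by linarith) x)
    (integrableOn_Ioo_rpow_mul_rpow_mul hm (k := 0) ha x) α κ

lemma integrableOn_Ioi_rpow_mul_affine_mul (hb : 1 < b) {x : ℝ} (hx : 0 < x) (α κ : ℝ) :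
    IntegrableOn (fun y => y ^ a * (α * y - κ) * m y) (Ioi x) := by
  simpa using integrableOn_rpow_mul_sub_mul_mul
    (integrableOn_Ioi_rpow_mul_rpow_mul hm (k := 1) hb hx)
    (integrableOn_Ioi_rpow_mul_rpow_mul hm (k := 0) (by linarith) hx) α κ

lemma greenResolvent_affine (ha : a < 0) (hb : 1 < b) {x : ℝ} (hx : 0 < x) (α κ : ℝ) :
    greenResolvent a b m (fun y => α * y - κ) x
      = c * α / ((1 - a) * (b - 1)) * x - c * κ / (-a * b) := by
  have haffine : (fun y : ℝ => α * y - κ) = fun y => α * y ^ (1 : ℝ) - κ * y ^ (0 : ℝ) := by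
    simp
  rw [haffine, greenResolvent_sub_mul
      (integrableOn_Ioo_rpow_mul_rpow_mul hm (by linarith) x)
      (integrableOn_Ioo_rpow_mul_rpow_mul hm ha x)
      (integrableOn_Ioi_rpow_mul_rpow_mul hm hb hx)
      (integrableOn_Ioi_rpow_mul_rpow_mul hm (by linarith) hx),
    greenResolvent_rpow hm (by linarith) hb hx, greenResolvent_rpow hm ha (by linarith) hx,
    rpow_one, rpow_zero]
  ring

end PowerSpeedDensity

/-- The value `V^∞ = R_r σ̃` of the infinite stopping problem for the American call on
geometric Brownian motion with exponential refraction rate `λ`: the Green-kernel resolvent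
at rate `r` of the density `σ̃(y) = (r+λ−μ)y − K(r+λ)` on `[x̂,∞)` (and `0` below) equals
`c₁x + c₂ + c₃x^a` above the threshold `x̂` and `c₄x^b` below it. -/
theorem infinite_call_value_representation
    (μ σ r lam K : ℝ) (hσ : 0 < σ) (hr : 0 < r) (hlam : 0 < lam)
    (hμ : μ < r) (hK : 0 < K)
    (p b a Br β : ℝ)
    (hp : p = 1 / 2 - μ / σ ^ 2)
    (hb : b = p + Real.sqrt (p ^ 2 + 2 * r / σ ^ 2))
    (ha : a = p - Real.sqrt (p ^ 2 + 2 * r / σ ^ 2))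
    (hBr : Br = b - a)
    (hβ : β = p + Real.sqrt (p ^ 2 + 2 * (r + lam) / σ ^ 2))
    (m' : ℝ → ℝ) (hm : ∀ y : ℝ, m' y = 2 / σ ^ 2 * y ^ (2 * μ / σ ^ 2 - 2))
    (xhat : ℝ) (hxhat : xhat = β * K / (β - 1))
    (st : ℝ → ℝ)
    (hst : ∀ y : ℝ, st y = if xhat ≤ y then (r + lam - μ) * y - K * (r + lam) else 0)
    (c₃ c₄ : ℝ)
    (hc₃ : c₃ = -(Br⁻¹ *
      ∫ y in Set.Ioo (0 : ℝ) xhat, y ^ b * ((r + lam - μ) * y - K * (r + lam)) * m' y))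
    (hc₄ : c₄ = Br⁻¹ *
      ∫ y in Set.Ioi xhat, y ^ a * ((r + lam - μ) * y - K * (r + lam)) * m' y) :
    IntegrableOn (fun y => y ^ b * ((r + lam - μ) * y - K * (r + lam)) * m' y) (Set.Ioo 0 xhat)
    ∧ IntegrableOn (fun y => y ^ a * ((r + lam - μ) * y - K * (r + lam)) * m' y) (Set.Ioi xhat)
    ∧ ∀ x : ℝ, 0 < x →
        IntegrableOn (fun y => y ^ b * st y * m' y) (Set.Ioo 0 x)
        ∧ IntegrableOn (fun y => y ^ a * st y * m' y) (Set.Ioi x)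
        ∧ (xhat ≤ x →
            Br⁻¹ * (x ^ a * (∫ y in Set.Ioo (0 : ℝ) x, y ^ b * st y * m' y)
                + x ^ b * (∫ y in Set.Ioi x, y ^ a * st y * m' y))
              = (r + lam - μ) / (r - μ) * x - K * (r + lam) / r + c₃ * x ^ a)
        ∧ (x ≤ xhat →
            Br⁻¹ * (x ^ a * (∫ y in Set.Ioo (0 : ℝ) x, y ^ b * st y * m' y)
                + x ^ b * (∫ y in Set.Ioi x, y ^ a * st y * m' y))
              = c₄ * x ^ b) := by
  have ha0 : a < 0 := by
    rw [ha]
    exact (mem_Ioo_gbm_roots hσ hp (k := 0) (by simpa)).1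
  have hb1 : 1 < b := by
    rw [hb]
    exact (mem_Ioo_gbm_roots hσ hp (k := 1) (by simpa)).2
  have hβ1 : 1 < β := by
    rw [hβ]
    exact (mem_Ioo_gbm_roots hσ hp (k := 1) (by simp; linarith)).2
  have hxhat0 : 0 < xhat := hxhat ▸ div_pos (by nlinarith) (by linarith)
  have hab : -a * b = 2 * r / σ ^ 2 := by
    simpa [← ha, ← hb] using gbm_roots_sub_mul_sub hσ hp hr.le 0
  have hab1 : (1 - a) * (b - 1) = 2 * (r - μ) / σ ^ 2 := by
    simpa [← ha, ← hb] using gbm_roots_sub_mul_sub hσ hp hr.le 1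
  have hm' : ∀ y, m' y = 2 / σ ^ 2 * y ^ (-(a + b) - 1) := fun y => by
    rw [hm, ha, hb, hp]
    ring_nf
  have hst' : st = (Ici xhat).indicator fun y => (r + lam - μ) * y - K * (r + lam) := by
    funext y
    simp only [hst, indicator, mem_Ici]
  have hG : ∀ x, 0 < x → greenResolvent a b m' (fun y => (r + lam - μ) * y - K * (r + lam)) x
      = (r + lam - μ) / (r - μ) * x - K * (r + lam) / r := fun x hx => by
    rw [greenResolvent_affine hm' ha0 hb1 hx, hab, hab1]
    field_simp
  have hlow := integrableOn_Ioo_rpow_mul_affine_mul hm' ha0 (r + lam - μ) (K * (r + lam))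
  have hup := fun x (hx : 0 < x) =>
    integrableOn_Ioi_rpow_mul_affine_mul hm' hb1 hx (r + lam - μ) (K * (r + lam))
  subst hBr hc₃ hc₄ hst'
  refine ⟨hlow xhat, hup xhat hxhat0, fun x hx => ⟨?_, ?_, fun hx' => ?_, fun hx' => ?_⟩⟩
  · rw [rpow_mul_indicator_mul]
    exact (hlow x).indicator measurableSet_Ici
  · rw [rpow_mul_indicator_mul]
    exact (hup x hx).indicator measurableSet_Ici
  · exact (greenResolvent_indicator_Ici_of_le hx' (hlow x)).trans (by rw [hG x hx]; ring)
  · exact (greenResolvent_indicator_Ici_of_ge hx').trans (by ring)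
end

section
/- Let μ ∈ ℝ, σ > 0, r > 0 and x > 0. Set p = 1/2 − μ/σ², b = p + √(p² + 2r/σ²), a = p − √(p² + 2r/σ²), B_r = b − a, and m'(y) = (2/σ²) y^{2μ/σ² − 2}. For every measurable f : (0,∞) → [0,∞], with γ_t the centered Gaussian measure on ℝ with variance t (and γ_0 = δ_0), the following identity holds in [0,∞]: ∫₀^∞ e^{−rt} ( ∫_ℝ f( x·exp((μ − σ²/2)t + σz) ) dγ_t(z) ) dt = B_r^{-1}[ x^{a} ∫₀^x y^{b} f(y) m'(y) dy + x^{b} ∫_x^∞ y^{a} f(y) m'(y) dy ]. -/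
open Real Set MeasureTheory ProbabilityTheory ENNReal
open scoped NNReal

/-!
With `m = μ - σ² / 2`, the exponent `m t + σ W_t` of the geometric Brownian motion is a Brownian
motion with drift, whose law at time `t` has the density `p_t` of `N(m t, σ² t)`. By Tonelli the
resolvent is therefore `∫ G(u) f(x eᵘ) du` with `G(u) = ∫₀^∞ e^{-rt} p_t(u) dt`. This time integral
is the Laplace-type integral `∫₀^∞ t^{-1/2} e^{-(a² t + b² / t)} dt = √π / a · e^{-2ab}`, proved by
the substitutions `t = s²`, `s ↦ b / (a s)` and `v = a s - b / s`; it gives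
`G(u) = e^{(m u - Δ |u|) / σ²} / Δ` with `Δ = √(m² + 2 r σ²)`. Since `m = -σ² (a + b) / 2` and
`Δ = σ² (b - a) / 2` for the exponents `a < b`, the substitution `y = x eᵘ` turns
`G` into the Green kernel `x^a y^b m'(y) / B` below `x` and `x^b y^a m'(y) / B` above it.
-/

theorem lintegral_Ioi_eq_comp_sq (g : ℝ → ℝ≥0∞) :
    ∫⁻ t in Ioi 0, g t = ∫⁻ s in Ioi 0, ENNReal.ofReal (2 * s) * g (s ^ 2) := by
  have himage : (fun s : ℝ ↦ s ^ 2) '' Ioi 0 = Ioi 0 := by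
    refine (image_subset_iff.2 fun s (hs : 0 < s) ↦ pow_pos hs 2).antisymm fun t ht ↦ ?_
    exact ⟨√t, sqrt_pos.2 ht, sq_sqrt (le_of_lt ht)⟩
  conv_lhs => rw [← himage]
  rw [lintegral_image_eq_lintegral_abs_deriv_mul measurableSet_Ioi
    (fun s _ ↦ by simpa using (hasDerivAt_pow 2 s).hasDerivWithinAt)
    ((pow_left_strictMonoOn₀ two_ne_zero).mono fun s (hs : 0 < s) ↦ hs.le).injOn]
  refine setLIntegral_congr_fun measurableSet_Ioi fun s (hs : 0 < s) ↦ ?_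
  rw [abs_of_pos (by positivity)]

theorem lintegral_Ioi_eq_comp_div {c : ℝ} (hc : 0 < c) (g : ℝ → ℝ≥0∞) :
    ∫⁻ s in Ioi 0, g s = ∫⁻ s in Ioi 0, ENNReal.ofReal (c / s ^ 2) * g (c / s) := by
  have himage : (fun s ↦ c / s) '' Ioi 0 = Ioi 0 :=
    (image_subset_iff.2 fun s (hs : 0 < s) ↦ div_pos hc hs).antisymm fun s hs ↦
      ⟨c / s, div_pos hc hs, div_div_cancel₀ hc.ne'⟩
  have hderiv : ∀ s ∈ Ioi (0 : ℝ),
      HasDerivWithinAt (fun s ↦ c / s) (-(c / s ^ 2)) (Ioi 0) s := fun s hs ↦ by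
    simpa [div_eq_mul_inv] using ((hasDerivAt_inv (ne_of_gt hs)).const_mul c).hasDerivWithinAt
  conv_lhs => rw [← himage]
  rw [lintegral_image_eq_lintegral_abs_deriv_mul measurableSet_Ioi hderiv
    fun s _ s' _ h ↦ inv_injective (by simpa [div_eq_mul_inv, hc.ne'] using h)]
  refine setLIntegral_congr_fun measurableSet_Ioi fun s (hs : 0 < s) ↦ ?_
  rw [abs_neg, abs_of_pos (by positivity)]

theorem lintegral_eq_comp_mul_sub_div {a b : ℝ} (ha : 0 < a) (hb : 0 < b) (g : ℝ → ℝ≥0∞) :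
    ∫⁻ v, g v = ∫⁻ s in Ioi 0, ENNReal.ofReal (a + b / s ^ 2) * g (a * s - b / s) := by
  have hderiv : ∀ s ∈ Ioi (0 : ℝ), HasDerivAt (fun s ↦ a * s - b / s) (a + b / s ^ 2) s := by
    intro s hs
    have hinv : HasDerivAt (fun s ↦ b / s) (-(b / s ^ 2)) s := by
      simpa [div_eq_mul_inv] using (hasDerivAt_inv (ne_of_gt hs)).const_mul b
    have h := ((hasDerivAt_id' s).const_mul a).sub hinv
    rwa [mul_one, sub_neg_eq_add] at h
  have hmono : StrictMonoOn (fun s ↦ a * s - b / s) (Ioi 0) :=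
    strictMonoOn_of_deriv_pos (convex_Ioi 0)
      (fun s hs ↦ (hderiv s hs).continuousAt.continuousWithinAt) fun s hs ↦ by
        rw [interior_Ioi] at hs
        rw [(hderiv s hs).deriv]
        positivity
  have himage : (fun s ↦ a * s - b / s) '' Ioi 0 = univ := by
    refine eq_univ_of_forall fun v ↦ ?_
    set w := √(v ^ 2 + 4 * a * b)
    have hw : w ^ 2 = v ^ 2 + 4 * a * b := sq_sqrt (by positivity)
    have hvw : 0 < v + w := by
      nlinarith [abs_lt_of_sq_lt_sq' (show v ^ 2 < w ^ 2 by nlinarith) (sqrt_nonneg _)]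
    refine ⟨(v + w) / (2 * a), div_pos hvw (by positivity), ?_⟩
    field_simp [hvw.ne']
    linear_combination hw
  rw [← setLIntegral_univ, ← himage, lintegral_image_eq_lintegral_abs_deriv_mul
    measurableSet_Ioi (fun s hs ↦ (hderiv s hs).hasDerivWithinAt) hmono.injOn]
  refine setLIntegral_congr_fun measurableSet_Ioi fun s (hs : 0 < s) ↦ ?_
  rw [abs_of_pos (by positivity)]

theorem lintegral_Ioi_eq_comp_mul_exp {x : ℝ} (hx : 0 < x) (g : ℝ → ℝ≥0∞) :
    ∫⁻ y in Ioi 0, g y = ∫⁻ u, ENNReal.ofReal (x * exp u) * g (x * exp u) := by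
  have himage : (fun u ↦ x * exp u) '' univ = Ioi 0 := by
    rw [image_univ]
    refine (range_subset_iff.2 fun u ↦ mul_pos hx (exp_pos u)).antisymm
      fun y (hy : 0 < y) ↦ ⟨log (y / x), ?_⟩
    show x * exp (log (y / x)) = y
    rw [exp_log (div_pos hy hx), mul_div_cancel₀ _ hx.ne']
  rw [← himage, lintegral_image_eq_lintegral_abs_deriv_mul MeasurableSet.univ
    (fun u _ ↦ ((hasDerivAt_exp u).const_mul x).hasDerivWithinAt)
    fun u _ u' _ h ↦ exp_injective (mul_left_cancel₀ hx.ne' h), setLIntegral_univ]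
  simp_rw [abs_of_pos (mul_pos hx (exp_pos _))]

theorem lintegral_Ioi_eq_Ioo_add_Ioi {a b : ℝ} (hab : a < b) (g : ℝ → ℝ≥0∞) :
    ∫⁻ y in Ioi a, g y = (∫⁻ y in Ioo a b, g y) + ∫⁻ y in Ioi b, g y := by
  rw [← Ioo_union_Ici_eq_Ioi hab, lintegral_union measurableSet_Ici
    ((Iio_disjoint_Ici le_rfl).mono_left Ioo_subset_Iio_self),
    setLIntegral_congr Ioi_ae_eq_Ici.symm]

theorem lintegral_exp_neg_sq :
    ∫⁻ v : ℝ, ENNReal.ofReal (exp (-v ^ 2)) = ENNReal.ofReal √π := by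
  rw [← ofReal_integral_eq_lintegral_ofReal
    (by simpa using integrable_exp_neg_mul_sq one_pos) (ae_of_all _ fun v ↦ (exp_pos _).le)]
  simpa using congrArg ENNReal.ofReal (integral_gaussian 1)

theorem lintegral_Ioi_exp_neg_sq_mul_sub_div {a b : ℝ} (ha : 0 < a) (hb : 0 < b) :
    ∫⁻ s in Ioi 0, ENNReal.ofReal (exp (-(a * s - b / s) ^ 2))
      = ENNReal.ofReal (√π / (2 * a)) := by
  set K := ∫⁻ s in Ioi 0, ENNReal.ofReal (exp (-(a * s - b / s) ^ 2))
  -- `s ↦ b / (a s)` swaps `a s` and `b / s`, so it leaves the integrand invariant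
  have hinv : K = ∫⁻ s in Ioi 0, ENNReal.ofReal (b / a / s ^ 2) *
      ENNReal.ofReal (exp (-(a * s - b / s) ^ 2)) := by
    refine (lintegral_Ioi_eq_comp_div (div_pos hb ha) _).trans
      (setLIntegral_congr_fun measurableSet_Ioi fun s (hs : 0 < s) ↦ ?_)
    congr 3
    field_simp
    ring
  have hsum : K + K = ENNReal.ofReal a⁻¹ * ∫⁻ v, ENNReal.ofReal (exp (-v ^ 2)) := by
    rw [lintegral_eq_comp_mul_sub_div ha hb, ← lintegral_const_mul' _ _ ofReal_ne_top]
    nth_rewrite 2 [hinv]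
    rw [← lintegral_add_left (by fun_prop)]
    refine setLIntegral_congr_fun measurableSet_Ioi fun s (hs : 0 < s) ↦ ?_
    rw [← ofReal_mul (by positivity), ← ofReal_add (by positivity) (by positivity),
      ← ofReal_mul (by positivity), ← ofReal_mul (by positivity)]
    congr 1
    field_simp
  rw [lintegral_exp_neg_sq, ← ofReal_mul (by positivity), ← two_mul] at hsum
  rw [← ENNReal.mul_right_inj two_ne_zero ofNat_ne_top, hsum, ← ofReal_ofNat,
    ← ofReal_mul zero_le_two]
  congr 1
  field_simp

theorem lintegral_Ioi_inv_sqrt_mul_exp_neg_add_div {a b : ℝ} (ha : 0 < a) (hb : 0 < b) :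
    ∫⁻ t in Ioi 0, ENNReal.ofReal ((√t)⁻¹ * exp (-(a ^ 2 * t + b ^ 2 / t)))
      = ENNReal.ofReal (√π / a * exp (-(2 * a * b))) := by
  have hsq : ∀ s > (0 : ℝ), ENNReal.ofReal (2 * s) *
      ENNReal.ofReal ((√(s ^ 2))⁻¹ * exp (-(a ^ 2 * s ^ 2 + b ^ 2 / s ^ 2)))
      = ENNReal.ofReal (2 * exp (-(2 * a * b))) *
        ENNReal.ofReal (exp (-(a * s - b / s) ^ 2)) := by
    intro s hs
    have hexp : -(a ^ 2 * s ^ 2 + b ^ 2 / s ^ 2) = -(2 * a * b) + -(a * s - b / s) ^ 2 := by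
      field_simp
      ring
    rw [← ofReal_mul (by positivity), ← ofReal_mul (by positivity), sqrt_sq hs.le, hexp,
      exp_add]
    congr 1
    field_simp
  rw [lintegral_Ioi_eq_comp_sq, setLIntegral_congr_fun measurableSet_Ioi hsq,
    lintegral_const_mul' _ _ ofReal_ne_top, lintegral_Ioi_exp_neg_sq_mul_sub_div ha hb,
    ← ofReal_mul (by positivity)]
  congr 1
  field_simp

theorem lintegral_gaussianReal_comp_add_mul {v : ℝ≥0} (hv : v ≠ 0) {σ : ℝ} (hσ : σ ≠ 0)
    (c : ℝ) {g : ℝ → ℝ≥0∞} (hg : Measurable g) :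
    ∫⁻ z, g (c + σ * z) ∂gaussianReal 0 v
      = ∫⁻ u, gaussianPDF c (‖σ‖₊ ^ 2 * v) u * g u := by
  have hmap : (gaussianReal 0 v).map (fun z ↦ c + σ * z) = gaussianReal c (‖σ‖₊ ^ 2 * v) := by
    rw [show (fun z ↦ c + σ * z) = (c + ·) ∘ (σ * ·) from rfl,
      ← Measure.map_map (by fun_prop) (by fun_prop), gaussianReal_map_const_mul,
      gaussianReal_map_const_add, mul_zero, zero_add]
    congr 2
    exact NNReal.eq (by simp)
  rw [← lintegral_map hg (by fun_prop), hmap,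
    gaussianReal_of_var_ne_zero _ (mul_ne_zero (by simpa) hv),
    lintegral_withDensity_eq_lintegral_mul _ (measurable_gaussianPDF _ _) hg]
  rfl

/-- The `r`-resolvent density `∫₀^∞ e^{-rt} p_t(u) dt` of Brownian motion with drift `m` and
volatility `σ`, where `p_t` is the density of `N(m t, σ² t)`. -/
noncomputable def bmGreen (m σ r u : ℝ) : ℝ :=
  exp ((m * u - √(m ^ 2 + 2 * r * σ ^ 2) * |u|) / σ ^ 2) / √(m ^ 2 + 2 * r * σ ^ 2)

theorem lintegral_Ioi_exp_neg_mul_gaussianPDF_eq_bmGreen {m σ r u : ℝ} (hσ : σ ≠ 0)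
    (hr : 0 < r) (hu : u ≠ 0) :
    ∫⁻ t in Ioi 0, ENNReal.ofReal (exp (-r * t)) * gaussianPDF (m * t) (‖σ‖₊ ^ 2 * t.toNNReal) u
      = ENNReal.ofReal (bmGreen m σ r u) := by
  set Δ := √(m ^ 2 + 2 * r * σ ^ 2)
  set s := √(2 * σ ^ 2)
  have hΔ : 0 < Δ := sqrt_pos.2 (by positivity)
  have hs : 0 < s := sqrt_pos.2 (by positivity)
  have hΔ2 : Δ ^ 2 = m ^ 2 + 2 * r * σ ^ 2 := sq_sqrt (by positivity)
  have hs2 : s ^ 2 = 2 * σ ^ 2 := sq_sqrt (by positivity)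
  have hdensity : ∀ t > (0 : ℝ), ENNReal.ofReal (exp (-r * t)) *
      gaussianPDF (m * t) (‖σ‖₊ ^ 2 * t.toNNReal) u
      = ENNReal.ofReal ((√π * s)⁻¹ * exp (m * u / σ ^ 2)) *
        ENNReal.ofReal ((√t)⁻¹ * exp (-((Δ / s) ^ 2 * t + (|u| / s) ^ 2 / t))) := by
    intro t ht
    have hsqrt : √(2 * π * (σ ^ 2 * t)) = √π * s * √t := by
      rw [← sqrt_mul (by positivity), ← sqrt_mul (by positivity)]
      ring_nf
    have hexp : exp (-r * t) * exp (-(u - m * t) ^ 2 / (2 * (σ ^ 2 * t)))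
        = exp (m * u / σ ^ 2) * exp (-((Δ / s) ^ 2 * t + (|u| / s) ^ 2 / t)) := by
      rw [← exp_add, ← exp_add, div_pow, div_pow, hΔ2, hs2, sq_abs]
      congr 1
      field_simp
      ring
    rw [gaussianPDF, gaussianPDFReal, NNReal.coe_mul, NNReal.coe_pow, coe_nnnorm, norm_eq_abs,
      sq_abs, coe_toNNReal _ ht.le, hsqrt, ← ofReal_mul (by positivity),
      ← ofReal_mul (by positivity)]
    congr 1
    linear_combination (√π * s * √t)⁻¹ * hexp
  rw [setLIntegral_congr_fun measurableSet_Ioi hdensity, lintegral_const_mul' _ _ ofReal_ne_top,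
    lintegral_Ioi_inv_sqrt_mul_exp_neg_add_div (div_pos hΔ hs) (div_pos (abs_pos.2 hu) hs),
    ← ofReal_mul (by positivity)]
  have hrate : 2 * (Δ / s) * (|u| / s) = Δ * |u| / σ ^ 2 := by
    rw [mul_assoc, div_mul_div_comm, ← sq, hs2]
    field_simp
  change _ = ENNReal.ofReal (exp ((m * u - Δ * |u|) / σ ^ 2) / Δ)
  rw [hrate, exp_neg, sub_div, exp_sub]
  congr 1
  field_simp

theorem bm_resolvent_eq_lintegral_bmGreen {m σ r : ℝ} (hσ : σ ≠ 0) (hr : 0 < r)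
    {g : ℝ → ℝ≥0∞} (hg : Measurable g) :
    ∫⁻ t in Ioi 0, ENNReal.ofReal (exp (-r * t)) *
        ∫⁻ z, g (m * t + σ * z) ∂gaussianReal 0 t.toNNReal
      = ∫⁻ u, ENNReal.ofReal (bmGreen m σ r u) * g u := by
  have hmeas : Measurable fun q : ℝ × ℝ ↦ ENNReal.ofReal (exp (-r * q.1)) *
      gaussianPDF (m * q.1) (‖σ‖₊ ^ 2 * q.1.toNNReal) q.2 * g q.2 := by
    fun_prop
  calc _ = ∫⁻ t in Ioi 0, ∫⁻ u, ENNReal.ofReal (exp (-r * t)) *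
          gaussianPDF (m * t) (‖σ‖₊ ^ 2 * t.toNNReal) u * g u := by
        refine setLIntegral_congr_fun measurableSet_Ioi fun t (ht : 0 < t) ↦ ?_
        rw [lintegral_gaussianReal_comp_add_mul (by simpa using ht) hσ _ hg,
          ← lintegral_const_mul' _ _ ofReal_ne_top]
        simp only [mul_assoc]
    _ = ∫⁻ u, ∫⁻ t in Ioi 0, ENNReal.ofReal (exp (-r * t)) *
          gaussianPDF (m * t) (‖σ‖₊ ^ 2 * t.toNNReal) u * g u :=
        lintegral_lintegral_swap hmeas.aemeasurable
    _ = _ := by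
        refine lintegral_congr_ae ((Measure.ae_ne volume 0).mono fun u hu ↦ ?_)
        dsimp only
        rw [lintegral_mul_const _ (by fun_prop),
          lintegral_Ioi_exp_neg_mul_gaussianPDF_eq_bmGreen hσ hr hu]

theorem gbm_resolvent_eq_lintegral_bmGreen {m σ r x : ℝ} (hσ : σ ≠ 0) (hr : 0 < r) (hx : 0 < x)
    {f : ℝ → ℝ≥0∞} (hf : Measurable f) :
    ∫⁻ t in Ioi 0, ENNReal.ofReal (exp (-r * t)) *
        ∫⁻ z, f (x * exp (m * t + σ * z)) ∂gaussianReal 0 t.toNNReal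
      = ∫⁻ y in Ioi 0, ENNReal.ofReal (bmGreen m σ r (log (y / x)) / y) * f y := by
  rw [bm_resolvent_eq_lintegral_bmGreen (g := fun u ↦ f (x * exp u)) hσ hr (by fun_prop),
    lintegral_Ioi_eq_comp_mul_exp hx]
  refine lintegral_congr fun u ↦ ?_
  rw [mul_div_cancel_left₀ _ hx.ne', log_exp, ← mul_assoc, ← ofReal_mul (by positivity),
    mul_div_cancel₀ _ (by positivity)]

theorem bmGreen_eq_of_roots {m σ r a b : ℝ} (hσ : σ ≠ 0) (hm : m = -(σ ^ 2 * (a + b) / 2))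
    (hΔ : √(m ^ 2 + 2 * r * σ ^ 2) = σ ^ 2 * (b - a) / 2) (u : ℝ) :
    bmGreen m σ r u = (b - a)⁻¹ * (2 / σ ^ 2) * exp (-((a + b) * u + (b - a) * |u|) / 2) := by
  rw [bmGreen, hΔ, hm, div_eq_mul_inv (exp _), mul_comm]
  congr 2
  · field_simp
  · field_simp
    ring

theorem exp_mul_log_div_eq_rpow {x y : ℝ} (hx : 0 < x) (hy : 0 < y) (c : ℝ) :
    exp (c * log (y / x)) = x ^ (-c) * y ^ c := by
  rw [mul_comm, ← rpow_def_of_pos (div_pos hy hx), div_rpow hy.le hx.le, rpow_neg hx.le,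
    div_eq_inv_mul]

theorem rpow_mul_rpow_neg_add_sub_one {y : ℝ} (hy : 0 < y) (a b : ℝ) :
    y ^ b * y ^ (-(a + b) - 1) = y ^ (-a) / y := by
  rw [← rpow_add hy, ← rpow_sub_one hy.ne']
  ring_nf

theorem bmGreen_log_div_div_of_lt {m σ r a b x y : ℝ} (hσ : σ ≠ 0)
    (hm : m = -(σ ^ 2 * (a + b) / 2)) (hΔ : √(m ^ 2 + 2 * r * σ ^ 2) = σ ^ 2 * (b - a) / 2)
    (hy : 0 < y) (hyx : y < x) :
    bmGreen m σ r (log (y / x)) / y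
      = (b - a)⁻¹ * (x ^ a * (y ^ b * (2 / σ ^ 2 * y ^ (-(a + b) - 1)))) := by
  have hx := hy.trans hyx
  rw [bmGreen_eq_of_roots hσ hm hΔ, abs_of_neg (log_neg (div_pos hy hx) ((div_lt_one hx).2 hyx)),
    show -((a + b) * log (y / x) + (b - a) * -log (y / x)) / 2 = -a * log (y / x) by ring,
    exp_mul_log_div_eq_rpow hx hy, neg_neg, mul_left_comm (y ^ b),
    rpow_mul_rpow_neg_add_sub_one hy]
  ring

theorem bmGreen_log_div_div_of_gt {m σ r a b x y : ℝ} (hσ : σ ≠ 0)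
    (hm : m = -(σ ^ 2 * (a + b) / 2)) (hΔ : √(m ^ 2 + 2 * r * σ ^ 2) = σ ^ 2 * (b - a) / 2)
    (hx : 0 < x) (hxy : x < y) :
    bmGreen m σ r (log (y / x)) / y
      = (b - a)⁻¹ * (x ^ b * (y ^ a * (2 / σ ^ 2 * y ^ (-(a + b) - 1)))) := by
  have hy := hx.trans hxy
  rw [bmGreen_eq_of_roots hσ hm hΔ, abs_of_pos (log_pos ((one_lt_div hx).2 hxy)),
    show -((a + b) * log (y / x) + (b - a) * log (y / x)) / 2 = -b * log (y / x) by ring,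
    exp_mul_log_div_eq_rpow hx hy, neg_neg, mul_left_comm (y ^ a), add_comm a b,
    rpow_mul_rpow_neg_add_sub_one hy]
  ring

theorem gbm_exponents_eq_of_roots {μ σ r p a b : ℝ} (hσ : σ ≠ 0) (hp : p = 1 / 2 - μ / σ ^ 2)
    (hb : b = p + √(p ^ 2 + 2 * r / σ ^ 2)) (ha : a = p - √(p ^ 2 + 2 * r / σ ^ 2)) :
    μ - σ ^ 2 / 2 = -(σ ^ 2 * (a + b) / 2) ∧
      √((μ - σ ^ 2 / 2) ^ 2 + 2 * r * σ ^ 2) = σ ^ 2 * (b - a) / 2 ∧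
      2 * μ / σ ^ 2 - 2 = -(a + b) - 1 := by
  have hsum : a + b = 1 - 2 * μ / σ ^ 2 := by rw [ha, hb, hp]; ring
  have hdisc : (μ - σ ^ 2 / 2) ^ 2 + 2 * r * σ ^ 2
      = (σ ^ 2) ^ 2 * (p ^ 2 + 2 * r / σ ^ 2) := by
    rw [hp]
    field_simp
    ring
  refine ⟨?_, ?_, ?_⟩
  · rw [hsum]; field_simp; ring
  · rw [hdisc, sqrt_mul (by positivity), sqrt_sq (by positivity), hb, ha]; ring
  · rw [hsum]; ring

/-- The resolvent of geometric Brownian motion, written via the Gaussian law of `W_t`, equals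
the classical Green-kernel representation in terms of the fundamental solutions `x^b`, `x^a`,
the Wronskian `B_r = b − a` and the speed density `m'`; identity in `[0,∞]`. -/
theorem gbm_resolvent_green_kernel
    (μ σ r x : ℝ) (hσ : 0 < σ) (hr : 0 < r) (hx : 0 < x)
    (p b a B : ℝ)
    (hp : p = 1 / 2 - μ / σ ^ 2)
    (hb : b = p + Real.sqrt (p ^ 2 + 2 * r / σ ^ 2))
    (ha : a = p - Real.sqrt (p ^ 2 + 2 * r / σ ^ 2))
    (hB : B = b - a)
    (m' : ℝ → ℝ) (hm : ∀ y : ℝ, m' y = 2 / σ ^ 2 * y ^ (2 * μ / σ ^ 2 - 2))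
    (f : ℝ → ℝ≥0∞) (hf : Measurable f) :
    ∫⁻ t in Set.Ioi (0 : ℝ), ENNReal.ofReal (Real.exp (-r * t)) *
        ∫⁻ z, f (x * Real.exp ((μ - σ ^ 2 / 2) * t + σ * z)) ∂(gaussianReal 0 (Real.toNNReal t))
      = ENNReal.ofReal B⁻¹ *
          (ENNReal.ofReal (x ^ a) *
              (∫⁻ y in Set.Ioo (0 : ℝ) x, ENNReal.ofReal (y ^ b * m' y) * f y)
            + ENNReal.ofReal (x ^ b) *
              (∫⁻ y in Set.Ioi x, ENNReal.ofReal (y ^ a * m' y) * f y)) := by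
  obtain ⟨hdrift, hΔ, hspeed⟩ := gbm_exponents_eq_of_roots hσ.ne' hp hb ha
  rw [gbm_resolvent_eq_lintegral_bmGreen hσ.ne' hr hx hf, lintegral_Ioi_eq_Ioo_add_Ioi hx,
    mul_add]
  simp_rw [← lintegral_const_mul' _ _ ofReal_ne_top]
  congr 1
  · refine setLIntegral_congr_fun measurableSet_Ioo fun y ⟨hy, hyx⟩ ↦ ?_
    rw [bmGreen_log_div_div_of_lt hσ.ne' hdrift hΔ hy hyx, hm, hspeed, hB,
      ofReal_mul' (by positivity), ofReal_mul' (by positivity), ofReal_mul' (by positivity)]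
    ring
  · refine setLIntegral_congr_fun measurableSet_Ioi fun y (hxy : x < y) ↦ ?_
    have hy := hx.trans hxy
    rw [bmGreen_log_div_div_of_gt hσ.ne' hdrift hΔ hx hxy, hm, hspeed, hB,
      ofReal_mul' (by positivity), ofReal_mul' (by positivity), ofReal_mul' (by positivity)]
    ring
end

section
/- In the setting described in the context, for every 0 < x ≤ x* one has λ(G V)(x) = V(x) + (γ/(γ+κ)) x^{β} ∫_{x*}^∞ y^{−κ} (d/dy)( H(y) y^{−b} ) dy, where (G V)(x) = (2S)^{-1}[ x^{α} ∫₀^x y^{β} V(y) m'(y) dy + x^{β} ∫_x^∞ y^{α} V(y) m'(y) dy ] with S = √(p² + 2(r+λ)/σ²) (so 2S = β − α), and all the integrals converge. -/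
/-!
Since `m'(y) = (2/σ²) y^(-1-2p)`, on `(0, x)` the integrand `y^β V m'` is `(2/σ²) c* y^(γ-1)`,
which integrates to `(2/σ²) c* x^γ / γ`. On `(x, ∞)` the integrand `y^α V m'` is
`(2/σ²) y^(-κ-1) g(y)` with `g = V y^(-b)`, equal to `c*` on `(x, x*]` and to `h = H y^(-b)`
beyond. Integrating `y^(-κ) h'` by parts over `(x*, ∞)` gives
`κ ∫_x^∞ y^(-κ-1) g = c* x^(-κ) + ∫_{x*}^∞ y^(-κ) h'`: the boundary term
`-(x*)^(-κ) h(x*)` cancels the upper end of the elementary integral over `(x, x*]` because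
`h(x*) = c*`. The two pieces combine to the formula because `2S = γ + κ` and `γκ = 2λ/σ²`.
-/

open Real Set MeasureTheory Filter Topology

theorem integrableOn_Ioo_zero_rpow_sub_one {k : ℝ} (hk : 0 < k) (x : ℝ) :
    IntegrableOn (fun y : ℝ => y ^ (k - 1)) (Ioo 0 x) := by
  rcases le_total x 0 with hx | hx
  · simp [Ioo_eq_empty_of_le hx]
  · exact ((intervalIntegrable_iff_integrableOn_Ioc_of_le hx).mp
      (intervalIntegral.intervalIntegrable_rpow' (by linarith))).mono_set Ioo_subset_Ioc_self

theorem integral_Ioo_zero_rpow_sub_one {k x : ℝ} (hk : 0 < k) (hx : 0 ≤ x) :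
    ∫ y in Ioo 0 x, y ^ (k - 1) = x ^ k / k := by
  rw [← integral_Ioc_eq_integral_Ioo, ← intervalIntegral.integral_of_le hx,
    integral_rpow (Or.inl (by linarith)), sub_add_cancel, zero_rpow hk.ne', sub_zero]

theorem integrableOn_Ioc_rpow {x : ℝ} (hx : 0 < x) (a k : ℝ) :
    IntegrableOn (fun y : ℝ => y ^ k) (Ioc x a) := by
  rcases le_total a x with hax | hxa
  · simp [Ioc_eq_empty_of_le hax]
  · exact (intervalIntegrable_iff_integrableOn_Ioc_of_le hxa).mp
      (intervalIntegral.intervalIntegrable_rpow (Or.inr (notMem_uIcc_of_lt hx (hx.trans_le hxa))))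

theorem mul_integral_Ioc_rpow_neg_sub_one {x a : ℝ} (hx : 0 < x) (hxa : x ≤ a) (k : ℝ) :
    k * ∫ y in Ioc x a, y ^ (-k - 1) = x ^ (-k) - a ^ (-k) := by
  rcases eq_or_ne k 0 with rfl | hk
  · simp
  rw [← intervalIntegral.integral_of_le hxa, integral_rpow (Or.inr ⟨by simpa using hk,
    notMem_uIcc_of_lt hx (hx.trans_le hxa)⟩), sub_add_cancel]
  field_simp
  ring

theorem integral_Ioi_rpow_neg_mul_deriv {f f' : ℝ → ℝ} {a k : ℝ} (ha : 0 < a)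
    (hf : ContinuousWithinAt f (Ici a) a) (hderiv : ∀ y ∈ Ioi a, HasDerivAt f (f' y) y)
    (hf' : IntegrableOn (fun y => y ^ (-k) * f' y) (Ioi a))
    (hf_int : IntegrableOn (fun y => y ^ (-k - 1) * f y) (Ioi a))
    (hlim : Tendsto (fun y => y ^ (-k) * f y) atTop (𝓝 0)) :
    ∫ y in Ioi a, y ^ (-k) * f' y =
      k * (∫ y in Ioi a, y ^ (-k - 1) * f y) - a ^ (-k) * f a := by
  have hprod : ∀ y ∈ Ioi a, HasDerivAt (fun y => y ^ (-k) * f y)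
      (y ^ (-k) * f' y - k * (y ^ (-k - 1) * f y)) y := fun y hy =>
    ((hasDerivAt_rpow_const (p := -k) (Or.inl (ha.trans hy).ne')).mul (hderiv y hy)).congr_deriv
      (by ring)
  have hIBP : ∫ y in Ioi a, (y ^ (-k) * f' y - k * (y ^ (-k - 1) * f y)) = 0 - a ^ (-k) * f a :=
    integral_Ioi_of_hasDerivAt_of_tendsto
      ((continuousAt_rpow_const a (-k) (Or.inl ha.ne')).continuousWithinAt.mul hf) hprod
      (hf'.sub (hf_int.const_mul k)) hlim
  rw [integral_sub hf' (hf_int.const_mul k), integral_const_mul] at hIBP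
  linarith

theorem MeasureTheory.IntegrableOn.rpow_mul_of_abs {f : ℝ → ℝ} {a e : ℝ} (ha : 0 ≤ a)
    (hf : AEStronglyMeasurable f (volume.restrict (Ioi a)))
    (hint : IntegrableOn (fun y => y ^ e * |f y|) (Ioi a)) :
    IntegrableOn (fun y => y ^ e * f y) (Ioi a) := by
  refine hint.mono' ((measurable_id.pow_const e).aestronglyMeasurable.mul hf) ?_
  filter_upwards [ae_restrict_mem measurableSet_Ioi] with y hy
  rw [norm_mul, Real.norm_eq_abs, Real.norm_eq_abs,
    abs_of_nonneg (rpow_nonneg (ha.trans hy.out.le) e)]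

theorem mul_integral_Ioi_rpow_neg_sub_one_mul {g f f' : ℝ → ℝ} {x a k c : ℝ} (hx : 0 < x)
    (hxa : x ≤ a) (hg_le : EqOn g (fun _ => c) (Ioc x a)) (hg_gt : EqOn g f (Ioi a))
    (hfa : f a = c) (hf : ContinuousWithinAt f (Ici a) a)
    (hderiv : ∀ y ∈ Ioi a, HasDerivAt f (f' y) y)
    (hf' : IntegrableOn (fun y => y ^ (-k) * f' y) (Ioi a))
    (hf_int : IntegrableOn (fun y => y ^ (-k - 1) * f y) (Ioi a))
    (hlim : Tendsto (fun y => y ^ (-k) * f y) atTop (𝓝 0)) :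
    IntegrableOn (fun y => y ^ (-k - 1) * g y) (Ioi x) ∧
      k * ∫ y in Ioi x, y ^ (-k - 1) * g y = c * x ^ (-k) + ∫ y in Ioi a, y ^ (-k) * f' y := by
  have hle : EqOn (fun y => y ^ (-k - 1) * g y) (fun y => y ^ (-k - 1) * c) (Ioc x a) :=
    fun y hy => by simp only [hg_le hy]
  have hgt : EqOn (fun y => y ^ (-k - 1) * g y) (fun y => y ^ (-k - 1) * f y) (Ioi a) :=
    fun y hy => by simp only [hg_gt hy]
  have hint_le : IntegrableOn (fun y => y ^ (-k - 1) * g y) (Ioc x a) :=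
    IntegrableOn.congr_fun ((integrableOn_Ioc_rpow hx a _).mul_const c) hle.symm measurableSet_Ioc
  have hint_gt : IntegrableOn (fun y => y ^ (-k - 1) * g y) (Ioi a) :=
    hf_int.congr_fun hgt.symm measurableSet_Ioi
  rw [← Ioc_union_Ioi_eq_Ioi hxa]
  refine ⟨hint_le.union hint_gt, ?_⟩
  rw [setIntegral_union (Ioc_disjoint_Ioi le_rfl) measurableSet_Ioi hint_le hint_gt,
    setIntegral_congr_fun measurableSet_Ioc hle, setIntegral_congr_fun measurableSet_Ioi hgt,
    integral_mul_const, integral_Ioi_rpow_neg_mul_deriv (hx.trans_le hxa) hf hderiv hf' hf_int hlim,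
    hfa]
  linear_combination c * mul_integral_Ioc_rpow_neg_sub_one hx hxa k

theorem sqrt_resolvent_roots {p r lam σ s S : ℝ} (hσ : 0 < σ) (hr : 0 ≤ r) (hlam : 0 < lam)
    (hs : s = √(p ^ 2 + 2 * r / σ ^ 2)) (hS : S = √(p ^ 2 + 2 * (r + lam) / σ ^ 2)) :
    0 < S + s ∧ 0 < S - s ∧ (S + s) * (S - s) = 2 * lam / σ ^ 2 := by
  have hu : 0 ≤ p ^ 2 + 2 * r / σ ^ 2 := by positivity
  have huv : p ^ 2 + 2 * r / σ ^ 2 < p ^ 2 + 2 * (r + lam) / σ ^ 2 := by gcongr; linarith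
  have hs0 : 0 ≤ s := hs ▸ sqrt_nonneg _
  have hsS : s < S := hs ▸ hS ▸ sqrt_lt_sqrt hu huv
  refine ⟨by linarith, by linarith, ?_⟩
  rw [← sq_sub_sq, hs, hS, sq_sqrt hu, sq_sqrt (hu.trans huv.le)]
  ring

theorem speed_density_rpow {μ σ p s S b β α κ γ : ℝ} {m' : ℝ → ℝ}
    (hp : p = 1 / 2 - μ / σ ^ 2) (hb : b = p + s) (hβ : β = p + S) (hα : α = p - S)
    (hκ : κ = S - s) (hγ : γ = S + s)
    (hm : ∀ y : ℝ, m' y = 2 / σ ^ 2 * y ^ (2 * μ / σ ^ 2 - 2)) :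
    (∀ y, 0 < y → y ^ β * y ^ b * m' y = 2 / σ ^ 2 * y ^ (γ - 1)) ∧
      ∀ y, 0 < y → y ^ α * m' y = 2 / σ ^ 2 * (y ^ (-κ - 1) * y ^ (-b)) := by
  refine ⟨fun y hy => ?_, fun y hy => ?_⟩ <;>
    rw [hm, mul_left_comm, ← rpow_add hy, ← rpow_add hy] <;>
    · congr 2
      subst hp hb hβ hα hκ hγ
      ring

section ValueFunction

variable {m' V H h : ℝ → ℝ} {C c b β α κ γ xs x : ℝ}

theorem integral_Ioo_rpow_mul_value_mul_density (hγ : 0 < γ) (hx : 0 ≤ x) (hxxs : x ≤ xs)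
    (hV : ∀ y, V y = if y ≤ xs then c * y ^ b else H y)
    (hm : ∀ y, 0 < y → y ^ β * y ^ b * m' y = C * y ^ (γ - 1)) :
    IntegrableOn (fun y => y ^ β * V y * m' y) (Ioo 0 x) ∧
      ∫ y in Ioo 0 x, y ^ β * V y * m' y = c * C * (x ^ γ / γ) := by
  have hV_eq : EqOn (fun y => y ^ β * V y * m' y) (fun y => c * C * y ^ (γ - 1)) (Ioo 0 x) :=
    fun y hy => by
      simp only [hV, if_pos (hy.2.le.trans hxxs)]
      linear_combination c * hm y hy.1
  refine ⟨IntegrableOn.congr_fun ((integrableOn_Ioo_zero_rpow_sub_one hγ x).const_mul _)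
    hV_eq.symm measurableSet_Ioo, ?_⟩
  rw [setIntegral_congr_fun measurableSet_Ioo hV_eq, integral_const_mul,
    integral_Ioo_zero_rpow_sub_one hγ hx]

theorem integrableOn_Ioi_rpow_neg_sub_one_mul_of_density (hxs : 0 ≤ xs) (hC : C ≠ 0)
    (hm : ∀ y, 0 < y → y ^ α * m' y = C * (y ^ (-κ - 1) * y ^ (-b)))
    (hh : ∀ y, h y = H y * y ^ (-b)) (hcont : ContinuousOn h (Ioi xs))
    (hint : IntegrableOn (fun y => y ^ α * |H y| * m' y) (Ioi xs)) :
    IntegrableOn (fun y => y ^ (-κ - 1) * h y) (Ioi xs) := by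
  refine IntegrableOn.rpow_mul_of_abs hxs (hcont.aestronglyMeasurable measurableSet_Ioi)
    (IntegrableOn.congr_fun (hint.const_mul C⁻¹) (fun y hy => ?_) measurableSet_Ioi)
  have hy : 0 < y := hxs.trans_lt hy
  calc C⁻¹ * (y ^ α * |H y| * m' y) = C⁻¹ * |H y| * (y ^ α * m' y) := by ring
    _ = y ^ (-κ - 1) * |h y| := by
      rw [hm y hy, hh, abs_mul, abs_of_pos (rpow_pos_of_pos hy _)]
      field_simp

theorem mul_integral_Ioi_rpow_mul_value_mul_density (hx : 0 < x) (hxxs : x ≤ xs)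
    (hV : ∀ y, V y = if y ≤ xs then c * y ^ b else H y) (hh : ∀ y, h y = H y * y ^ (-b))
    (hc : h xs = c) (hm : ∀ y, 0 < y → y ^ α * m' y = C * (y ^ (-κ - 1) * y ^ (-b)))
    (hh_diff : ContDiffOn ℝ 1 h (Ici xs))
    (hderiv_int : IntegrableOn (fun y => y ^ (-κ) * deriv h y) (Ioi xs))
    (h_int : IntegrableOn (fun y => y ^ (-κ - 1) * h y) (Ioi xs))
    (hlim : Tendsto (fun y => y ^ (-κ) * h y) atTop (𝓝 0)) :
    IntegrableOn (fun y => y ^ α * V y * m' y) (Ioi x) ∧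
      κ * ∫ y in Ioi x, y ^ α * V y * m' y =
        C * (c * x ^ (-κ) + ∫ y in Ioi xs, y ^ (-κ) * deriv h y) := by
  have hg_le : EqOn (fun y => V y * y ^ (-b)) (fun _ => c) (Ioc x xs) := fun y hy => by
    simp only [hV, if_pos hy.2, mul_assoc, ← rpow_add (hx.trans hy.1), add_neg_cancel, rpow_zero,
      mul_one]
  have hg_gt : EqOn (fun y => V y * y ^ (-b)) h (Ioi xs) := fun y hy => by
    simp only [hV, if_neg (not_le.2 hy.out), hh]
  obtain ⟨hg_int, hg⟩ := mul_integral_Ioi_rpow_neg_sub_one_mul hx hxxs hg_le hg_gt hc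
    (hh_diff.continuousOn.continuousWithinAt self_mem_Ici)
    (fun y hy => ((hh_diff.contDiffAt (Ici_mem_nhds hy)).differentiableAt one_ne_zero).hasDerivAt)
    hderiv_int h_int hlim
  have hV_eq : EqOn (fun y => y ^ α * V y * m' y)
      (fun y => C * (y ^ (-κ - 1) * (V y * y ^ (-b)))) (Ioi x) := fun y hy => by
    linear_combination V y * hm y (hx.trans hy)
  refine ⟨IntegrableOn.congr_fun (hg_int.const_mul C) hV_eq.symm measurableSet_Ioi, ?_⟩
  rw [setIntegral_congr_fun measurableSet_Ioi hV_eq, integral_const_mul, mul_left_comm, hg]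

end ValueFunction

theorem resolvent_of_value_below_threshold_general
    (μ σ r lam : ℝ) (hσ : 0 < σ) (hr : 0 < r) (hlam : 0 < lam)
    (p s S b β α κ γ : ℝ)
    (hp : p = 1 / 2 - μ / σ ^ 2)
    (hs : s = Real.sqrt (p ^ 2 + 2 * r / σ ^ 2))
    (hS : S = Real.sqrt (p ^ 2 + 2 * (r + lam) / σ ^ 2))
    (hb : b = p + s) (hβ : β = p + S) (hα : α = p - S)
    (hκ : κ = S - s) (hγ : γ = S + s)
    (m' : ℝ → ℝ) (hm : ∀ y : ℝ, m' y = 2 / σ ^ 2 * y ^ (2 * μ / σ ^ 2 - 2))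
    (xs : ℝ) (hxs : 0 < xs)
    (H : ℝ → ℝ)
    (hHdiff : ContDiffOn ℝ 1 H (Set.Ici xs))
    (h : ℝ → ℝ) (hh : ∀ y : ℝ, h y = H y * y ^ (-b))
    (hint1 : IntegrableOn (fun y => y ^ (-κ) * |deriv h y|) (Set.Ioi xs))
    (hlim : Tendsto (fun y => y ^ (-κ) * h y) atTop (nhds 0))
    (hint2 : IntegrableOn (fun y => y ^ α * |H y| * m' y) (Set.Ioi xs))
    (V : ℝ → ℝ)
    (hV : ∀ y : ℝ, V y = if y ≤ xs then H xs / xs ^ b * y ^ b else H y)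
    (GV : ℝ → ℝ)
    (hGV : ∀ x : ℝ, GV x = (2 * S)⁻¹ *
      (x ^ α * (∫ y in Set.Ioo (0 : ℝ) x, y ^ β * V y * m' y)
        + x ^ β * (∫ y in Set.Ioi x, y ^ α * V y * m' y))) :
    ∀ x : ℝ, 0 < x → x ≤ xs →
      IntegrableOn (fun y => y ^ β * V y * m' y) (Set.Ioo 0 x)
      ∧ IntegrableOn (fun y => y ^ α * V y * m' y) (Set.Ioi x)
      ∧ IntegrableOn (fun y => y ^ (-κ) * deriv h y) (Set.Ioi xs)
      ∧ lam * GV x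
          = V x + γ / (γ + κ) * x ^ β * ∫ y in Set.Ioi xs, y ^ (-κ) * deriv h y := by
  intro x hx hxxs
  obtain ⟨hγ0, hκ0, hγκ⟩ := hγ ▸ hκ ▸ sqrt_resolvent_roots hσ hr.le hlam hs hS
  obtain ⟨hm_low, hm_high⟩ := speed_density_rpow hp hb hβ hα hκ hγ hm
  have hh_diff : ContDiffOn ℝ 1 h (Ici xs) :=
    (hHdiff.mul fun y hy =>
      (contDiffAt_rpow_const_of_ne (hxs.trans_le hy).ne').contDiffWithinAt).congr fun y _ => hh y
  have hderiv_int : IntegrableOn (fun y => y ^ (-κ) * deriv h y) (Ioi xs) :=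
    hint1.rpow_mul_of_abs hxs.le (measurable_deriv h).aestronglyMeasurable
  have h_int := integrableOn_Ioi_rpow_neg_sub_one_mul_of_density hxs.le (by positivity) hm_high hh
    (hh_diff.continuousOn.mono Ioi_subset_Ici_self) hint2
  obtain ⟨hint_low, hlow⟩ :=
    integral_Ioo_rpow_mul_value_mul_density hγ0 hx.le hxxs hV hm_low
  obtain ⟨hint_high, hhigh⟩ := mul_integral_Ioi_rpow_mul_value_mul_density hx hxxs hV hh
    (by rw [hh, rpow_neg hxs.le, div_eq_mul_inv]) hm_high hh_diff hderiv_int h_int hlim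
  refine ⟨hint_low, hint_high, hderiv_int, ?_⟩
  have hxα : x ^ α = x ^ b * (x ^ γ)⁻¹ := by
    rw [← rpow_neg hx.le, ← rpow_add hx, hα, hb, hγ]; ring_nf
  have hxβ : x ^ β = x ^ b * x ^ κ := by rw [← rpow_add hx, hβ, hb, hκ]; ring_nf
  rw [hGV, hlow, eq_div_of_mul_eq hκ0.ne' ((mul_comm _ _).trans hhigh), hV x, if_pos hxxs, hxα,
    hxβ, rpow_neg hx.le, show 2 * S = γ + κ by rw [hγ, hκ]; ring,
    show lam = γ * κ * σ ^ 2 / 2 by field_simp at hγκ ⊢; linarith]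
  field_simp
  ring

/-- Below the exercise threshold `x*`, the Green-kernel resolvent at rate `r+λ` of the value
function `V` (a multiple of `y^b` below `x*`, equal to `H` above) satisfies
`λ(GV)(x) = V(x) + (γ/(γ+κ)) x^β ∫_{x*}^∞ y^{−κ} (H(y)y^{−b})' dy`. -/
theorem resolvent_of_value_below_threshold
    (μ σ r lam : ℝ) (hσ : 0 < σ) (hr : 0 < r) (hlam : 0 < lam)
    (p s S b β α κ γ : ℝ)
    (hp : p = 1 / 2 - μ / σ ^ 2)
    (hs : s = Real.sqrt (p ^ 2 + 2 * r / σ ^ 2))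
    (hS : S = Real.sqrt (p ^ 2 + 2 * (r + lam) / σ ^ 2))
    (hb : b = p + s) (hβ : β = p + S) (hα : α = p - S)
    (hκ : κ = S - s) (hγ : γ = S + s)
    (m' : ℝ → ℝ) (hm : ∀ y : ℝ, m' y = 2 / σ ^ 2 * y ^ (2 * μ / σ ^ 2 - 2))
    (xs : ℝ) (hxs : 0 < xs)
    (H : ℝ → ℝ)
    (hHcont : ContinuousOn H (Set.Ioi 0))
    (hHdiff : ContDiffOn ℝ 1 H (Set.Ici xs))
    (h : ℝ → ℝ) (hh : ∀ y : ℝ, h y = H y * y ^ (-b))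
    (hint1 : IntegrableOn (fun y => y ^ (-κ) * |deriv h y|) (Set.Ioi xs))
    (hlim : Tendsto (fun y => y ^ (-κ) * h y) atTop (nhds 0))
    (hint2 : IntegrableOn (fun y => y ^ α * |H y| * m' y) (Set.Ioi xs))
    (V : ℝ → ℝ)
    (hV : ∀ y : ℝ, V y = if y ≤ xs then H xs / xs ^ b * y ^ b else H y)
    (GV : ℝ → ℝ)
    (hGV : ∀ x : ℝ, GV x = (2 * S)⁻¹ *
      (x ^ α * (∫ y in Set.Ioo (0 : ℝ) x, y ^ β * V y * m' y)
        + x ^ β * (∫ y in Set.Ioi x, y ^ α * V y * m' y))) :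
    ∀ x : ℝ, 0 < x → x ≤ xs →
      IntegrableOn (fun y => y ^ β * V y * m' y) (Set.Ioo 0 x)
      ∧ IntegrableOn (fun y => y ^ α * V y * m' y) (Set.Ioi x)
      ∧ IntegrableOn (fun y => y ^ (-κ) * deriv h y) (Set.Ioi xs)
      ∧ lam * GV x
          = V x + γ / (γ + κ) * x ^ β * ∫ y in Set.Ioi xs, y ^ (-κ) * deriv h y :=
  resolvent_of_value_below_threshold_general μ σ r lam hσ hr hlam p s S b β α κ γ hp hs hS hb hβ hα
    hκ hγ m' hm xs hxs H hHdiff h hh hint1 hlim hint2 V hV GV hGV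
end

section
/- In the setting described in the context, for every x ≥ x* one has λ(G V)(x) = H(x) + (γ/(γ+κ)) x^{β} ∫_x^∞ y^{−κ} (d/dy)( H(y) y^{−b} ) dy − (κ/(γ+κ)) x^{α} ∫_{x*}^x y^{γ} (d/dy)( H(y) y^{−b} ) dy, where (G V)(x) = (2S)^{-1}[ x^{α} ∫₀^x y^{β} V(y) m'(y) dy + x^{β} ∫_x^∞ y^{α} V(y) m'(y) dy ] with S = √(p² + 2(r+λ)/σ²) (so 2S = β − α), and all the integrals converge. -/
/-!
Put `h(y) = H(y) y^{-b}`. Since `V` equals `c* y^b` below `x*` with `c* = h(x*)`, one has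
`V(y) = y^b h(max x* y)` for every `y > 0`, and since `m'(y) = (2/σ²) y^{-2p-1}` the two
Green integrands are `(2/σ²) y^{γ-1} h(max x* y)` on `(0, x)` and `(2/σ²) y^{-κ-1} h(y)` on
`(x, ∞)`. Integrating by parts against `h`, the boundary term at `x*` cancels the integral over
`(0, x*)`, where `h` is constant, and the one at `∞` vanishes; what remains are the
`h'`-integrals of the statement and two multiples of `h(x)`, which add up to `H(x)` because
`γκ = 2λ/σ²`, `γ + κ = 2S` and `α + γ = β - κ = b`.
-/

open Real Set MeasureTheory Filter Topology

theorem ContDiffOn.integrableOn_Ioo_deriv {f : ℝ → ℝ} {a b : ℝ}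
    (hf : ContDiffOn ℝ 1 f (Icc a b)) : IntegrableOn (deriv f) (Ioo a b) := by
  rcases lt_or_ge a b with hab | hba
  · have hcont : ContinuousOn (derivWithin f (Icc a b)) (Icc a b) :=
      hf.continuousOn_derivWithin (uniqueDiffOn_Icc hab) le_rfl
    refine (hcont.integrableOn_Icc.mono_set Ioo_subset_Icc_self).congr_fun
      (fun y hy => derivWithin_of_mem_nhds (Icc_mem_nhds hy.1 hy.2)) measurableSet_Ioo
  · simp [Ioo_eq_empty_of_le hba]

theorem ContDiffOn.hasDerivAt_deriv_of_mem_Ioi {f : ℝ → ℝ} {a y : ℝ}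
    (hf : ContDiffOn ℝ 1 f (Ici a)) (hy : y ∈ Ioi a) : HasDerivAt f (deriv f y) y :=
  ((hf.differentiableOn one_ne_zero y (Ioi_subset_Ici_self hy)).differentiableAt
    (Ici_mem_nhds hy)).hasDerivAt

theorem integral_Ioo_rpow_sub_one_mul {f f' : ℝ → ℝ} {a b c : ℝ} (ha : 0 < a)
    (hab : a ≤ b) (hc : c ≠ 0) (hf : ContinuousOn f (Icc a b))
    (hf' : ∀ y ∈ Ioo a b, HasDerivAt f (f' y) y) (hf'i : IntegrableOn f' (Ioo a b)) :
    ∫ y in Ioo a b, y ^ (c - 1) * f y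
      = (b ^ c * f b - a ^ c * f a - ∫ y in Ioo a b, y ^ c * f' y) / c := by
  have hIcc : uIcc a b = Icc a b := uIcc_of_le hab
  have hIoo : Ioo (min a b) (max a b) = Ioo a b := by rw [min_eq_left hab, max_eq_right hab]
  have hrpow : ∀ y ∈ Icc a b, HasDerivAt (fun y => y ^ c) (c * y ^ (c - 1)) y :=
    fun y hy => hasDerivAt_rpow_const (Or.inl (ha.trans_le hy.1).ne')
  have hrpow' : ContinuousOn (fun y => c * y ^ (c - 1)) (Icc a b) := fun y hy =>
    (continuousAt_const.mul
      (continuousAt_rpow_const y _ (Or.inl (ha.trans_le hy.1).ne'))).continuousWithinAt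
  have hparts := intervalIntegral.integral_mul_deriv_eq_deriv_mul_of_hasDerivAt
    (u := fun y => y ^ c) (v := f) (v' := f')
    (hIcc ▸ fun y hy => (hrpow y hy).continuousAt.continuousWithinAt) (hIcc ▸ hf)
    (hIoo ▸ fun y hy => hrpow y (Ioo_subset_Icc_self hy)) (hIoo ▸ hf')
    (hIcc ▸ hrpow').intervalIntegrable
    ((intervalIntegrable_iff_integrableOn_Ioo_of_le hab).2 hf'i)
  simp only [intervalIntegral.integral_of_le hab, integral_Ioc_eq_integral_Ioo, mul_assoc,
    integral_const_mul] at hparts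
  field_simp
  linarith

theorem integral_Ioi_rpow_sub_one_mul {f f' : ℝ → ℝ} {a c : ℝ} (ha : 0 < a) (hc : c ≠ 0)
    (hf : ContinuousWithinAt f (Ioi a) a) (hf' : ∀ y ∈ Ioi a, HasDerivAt f (f' y) y)
    (hf'i : IntegrableOn (fun y => y ^ c * f' y) (Ioi a))
    (hfi : IntegrableOn (fun y => y ^ (c - 1) * f y) (Ioi a))
    (hlim : Tendsto (fun y => y ^ c * f y) atTop (𝓝 0)) :
    ∫ y in Ioi a, y ^ (c - 1) * f y = -(a ^ c * f a + ∫ y in Ioi a, y ^ c * f' y) / c := by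
  have hparts := integral_Ioi_mul_deriv_eq_deriv_mul (u := fun y => y ^ c)
    (u' := fun y => c * y ^ (c - 1)) (v := f) (v' := f')
    (fun y hy => hasDerivAt_rpow_const (Or.inl (ha.trans hy).ne')) hf' hf'i
    (IntegrableOn.congr_fun (hfi.const_mul c) (fun y _ => by simp only [Pi.mul_apply]; ring)
      measurableSet_Ioi)
    (((continuousAt_rpow_const a c (Or.inl ha.ne')).continuousWithinAt.mul hf).tendsto) hlim
  simp only [Pi.mul_apply, mul_assoc, integral_const_mul] at hparts
  field_simp
  linarith

theorem integrableOn_Ioo_zero_rpow_sub_one_mul_max {f : ℝ → ℝ} {a b c : ℝ} (ha : 0 < a)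
    (hab : a ≤ b) (hc : 0 < c) (hf : ContinuousOn f (Icc a b)) :
    IntegrableOn (fun y => y ^ (c - 1) * f (max a y)) (Ioo 0 b) := by
  have hconst : IntervalIntegrable (fun y => y ^ (c - 1) * f (max a y)) volume 0 a := by
    refine ((intervalIntegral.intervalIntegrable_rpow' (r := c - 1) (by linarith)).mul_const
      (f a)).congr fun y hy => ?_
    rw [uIoc_of_le ha.le] at hy
    simp only [max_eq_left hy.2]
  have hcont : IntervalIntegrable (fun y => y ^ (c - 1) * f (max a y)) volume a b := by
    have h : ContinuousOn (fun y => y ^ (c - 1) * f y) (Icc a b) :=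
      (continuousOn_id.rpow_const fun y hy => Or.inl (ha.trans_le hy.1).ne').mul hf
    refine ContinuousOn.intervalIntegrable ?_
    rw [uIcc_of_le hab]
    exact h.congr fun y hy => by simp only [max_eq_right hy.1]
  exact (intervalIntegrable_iff_integrableOn_Ioo_of_le (ha.le.trans hab)).1 (hconst.trans hcont)

theorem integral_Ioo_zero_rpow_sub_one_mul_max {f f' : ℝ → ℝ} {a b c : ℝ} (ha : 0 < a)
    (hab : a ≤ b) (hc : 0 < c) (hf : ContinuousOn f (Icc a b))
    (hf' : ∀ y ∈ Ioo a b, HasDerivAt f (f' y) y) (hf'i : IntegrableOn f' (Ioo a b)) :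
    ∫ y in Ioo 0 b, y ^ (c - 1) * f (max a y)
      = (b ^ c * f b - ∫ y in Ioo a b, y ^ c * f' y) / c := by
  have hb : 0 ≤ b := ha.le.trans hab
  have hi := (intervalIntegrable_iff_integrableOn_Ioo_of_le hb).2
    (integrableOn_Ioo_zero_rpow_sub_one_mul_max ha hab hc hf)
  have hconst : ∫ y in (0)..a, y ^ (c - 1) * f (max a y) = a ^ c * f a / c := by
    rw [intervalIntegral.integral_congr (g := fun y => y ^ (c - 1) * f a) fun y hy => ?_,
      intervalIntegral.integral_mul_const, integral_rpow (Or.inl (by linarith)), sub_add_cancel,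
      zero_rpow hc.ne', sub_zero, div_mul_eq_mul_div]
    rw [uIcc_of_le ha.le] at hy
    simp only [max_eq_left hy.2]
  have hcont : ∫ y in a..b, y ^ (c - 1) * f (max a y) = ∫ y in Ioo a b, y ^ (c - 1) * f y := by
    rw [intervalIntegral.integral_of_le hab, integral_Ioc_eq_integral_Ioo]
    exact setIntegral_congr_fun measurableSet_Ioo fun y hy => by simp only [max_eq_right hy.1.le]
  rw [← integral_Ioc_eq_integral_Ioo, ← intervalIntegral.integral_of_le hb,
    ← intervalIntegral.integral_add_adjacent_intervals
      (hi.mono_set (by rw [uIcc_of_le ha.le, uIcc_of_le hb]; exact Icc_subset_Icc_right hab))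
      (hi.mono_set (by rw [uIcc_of_le hab, uIcc_of_le hb]; exact Icc_subset_Icc_left ha.le)),
    hconst, hcont,
    integral_Ioo_rpow_sub_one_mul ha hab hc.ne' hf hf' hf'i]
  ring

theorem value_eq_rpow_mul_max {H h V : ℝ → ℝ} {b xs y : ℝ} (hxs : 0 < xs) (hy : 0 < y)
    (hh : ∀ y, h y = H y * y ^ (-b))
    (hV : ∀ y, V y = if y ≤ xs then H xs / xs ^ b * y ^ b else H y) :
    V y = y ^ b * h (max xs y) := by
  rw [hV, hh]
  split_ifs with hle
  · rw [max_eq_left hle, rpow_neg hxs.le]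
    ring
  · rw [max_eq_right (not_le.1 hle).le, rpow_neg hy.le]
    field_simp

theorem rpow_mul_value_mul_density_eq {H h V m' : ℝ → ℝ} {a b c e k xs y : ℝ} (hxs : 0 < xs)
    (hy : 0 < y) (hh : ∀ y, h y = H y * y ^ (-b))
    (hV : ∀ y, V y = if y ≤ xs then H xs / xs ^ b * y ^ b else H y)
    (hm : ∀ y, m' y = k * y ^ e) (habc : a + b + e = c - 1) :
    y ^ a * V y * m' y = k * (y ^ (c - 1) * h (max xs y)) := by
  rw [value_eq_rpow_mul_max hxs hy hh hV, hm, ← habc, rpow_add hy, rpow_add hy]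
  ring

theorem integral_Ioo_zero_rpow_mul_value_mul_density {H h V m' : ℝ → ℝ} {a b c e k xs x : ℝ}
    (hxs : 0 < xs) (hx : xs ≤ x) (hc : 0 < c) (habc : a + b + e = c - 1)
    (hm : ∀ y, m' y = k * y ^ e) (hh : ∀ y, h y = H y * y ^ (-b))
    (hV : ∀ y, V y = if y ≤ xs then H xs / xs ^ b * y ^ b else H y)
    (hh1 : ContDiffOn ℝ 1 h (Ici xs)) :
    IntegrableOn (fun y => y ^ a * V y * m' y) (Ioo 0 x)
      ∧ IntegrableOn (fun y => y ^ c * deriv h y) (Ioo xs x)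
      ∧ ∫ y in Ioo 0 x, y ^ a * V y * m' y
          = k * ((x ^ c * h x - ∫ y in Ioo xs x, y ^ c * deriv h y) / c) := by
  have hhx : ContinuousOn h (Icc xs x) := hh1.continuousOn.mono Icc_subset_Ici_self
  have hderiv_int : IntegrableOn (deriv h) (Ioo xs x) :=
    (hh1.mono Icc_subset_Ici_self).integrableOn_Ioo_deriv
  have heq : EqOn (fun y => y ^ a * V y * m' y) (fun y => k * (y ^ (c - 1) * h (max xs y)))
      (Ioo 0 x) := fun y hy => rpow_mul_value_mul_density_eq hxs hy.1 hh hV hm habc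
  refine ⟨IntegrableOn.congr_fun
      ((integrableOn_Ioo_zero_rpow_sub_one_mul_max hxs hx hc hhx).const_mul k) heq.symm
      measurableSet_Ioo,
    hderiv_int.continuousOn_mul_of_subset (fun y hy =>
      (continuousAt_rpow_const y c (Or.inl (hxs.trans_le hy.1).ne')).continuousWithinAt)
      isCompact_Icc measurableSet_Ioo Ioo_subset_Icc_self, ?_⟩
  rw [setIntegral_congr_fun measurableSet_Ioo heq, integral_const_mul,
    integral_Ioo_zero_rpow_sub_one_mul_max hxs hx hc hhx
      (fun y hy => hh1.hasDerivAt_deriv_of_mem_Ioi hy.1) hderiv_int]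

theorem integral_Ioi_rpow_mul_value_mul_density {H h V m' : ℝ → ℝ} {a b c e k xs x : ℝ}
    (hxs : 0 < xs) (hx : xs ≤ x) (hc : c ≠ 0) (hk : 0 < k) (habc : a + b + e = c - 1)
    (hm : ∀ y, m' y = k * y ^ e) (hh : ∀ y, h y = H y * y ^ (-b))
    (hV : ∀ y, V y = if y ≤ xs then H xs / xs ^ b * y ^ b else H y)
    (hh1 : ContDiffOn ℝ 1 h (Ici xs))
    (hint_deriv : IntegrableOn (fun y => y ^ c * |deriv h y|) (Ioi xs))
    (hint : IntegrableOn (fun y => y ^ a * |H y| * m' y) (Ioi xs))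
    (hlim : Tendsto (fun y => y ^ c * h y) atTop (𝓝 0)) :
    IntegrableOn (fun y => y ^ a * V y * m' y) (Ioi x)
      ∧ IntegrableOn (fun y => y ^ c * deriv h y) (Ioi x)
      ∧ ∫ y in Ioi x, y ^ a * V y * m' y
          = k * (-(x ^ c * h x + ∫ y in Ioi x, y ^ c * deriv h y) / c) := by
  have hrpow : ∀ d : ℝ, ContinuousOn (fun y : ℝ => y ^ d) (Ioi xs) := fun d y hy =>
    (continuousAt_rpow_const y d (Or.inl (hxs.trans hy).ne')).continuousWithinAt
  have heq : EqOn (fun y => y ^ a * V y * m' y) (fun y => k * (y ^ (c - 1) * h y)) (Ioi xs) :=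
    fun y hy => (rpow_mul_value_mul_density_eq hxs (hxs.trans hy) hh hV hm habc).trans
      (by rw [max_eq_right (le_of_lt hy)])
  have hVint : IntegrableOn (fun y => y ^ a * V y * m' y) (Ioi xs) := by
    refine hint.mono' ?_ (ae_restrict_of_forall_mem measurableSet_Ioi fun y hy => ?_)
    · exact ((continuousOn_const.mul
        ((hrpow _).mul (hh1.continuousOn.mono Ioi_subset_Ici_self))).congr
          heq).aestronglyMeasurable measurableSet_Ioi
    · have hm0 : 0 ≤ m' y := by rw [hm]; exact mul_nonneg hk.le (rpow_nonneg (hxs.trans hy).le _)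
      rw [hV, if_neg (not_le.2 hy), norm_mul, norm_mul,
        norm_of_nonneg (rpow_nonneg (hxs.trans hy).le _), norm_of_nonneg hm0, norm_eq_abs]
  have hhint : IntegrableOn (fun y => y ^ (c - 1) * h y) (Ioi xs) :=
    IntegrableOn.congr_fun (hVint.const_mul k⁻¹)
      (fun y hy => by rw [show y ^ a * V y * m' y = _ from heq hy]; field_simp) measurableSet_Ioi
  have hdint : IntegrableOn (fun y => y ^ c * deriv h y) (Ioi xs) := by
    refine hint_deriv.mono' (((hrpow _).aestronglyMeasurable measurableSet_Ioi).mul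
      (aestronglyMeasurable_deriv h _)) (ae_restrict_of_forall_mem measurableSet_Ioi fun y hy => ?_)
    rw [norm_mul, norm_of_nonneg (rpow_nonneg (hxs.trans hy).le _), norm_eq_abs]
  have hxx : Ioi x ⊆ Ioi xs := Ioi_subset_Ioi hx
  refine ⟨hVint.mono_set hxx, hdint.mono_set hxx, ?_⟩
  rw [setIntegral_congr_fun measurableSet_Ioi (heq.mono hxx), integral_const_mul,
    integral_Ioi_rpow_sub_one_mul (hxs.trans_le hx) hc
      ((hh1.continuousOn x hx).mono (Ioi_subset_Ici_self.trans (Ici_subset_Ici.2 hx)))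
      (fun y hy => hh1.hasDerivAt_deriv_of_mem_Ioi (hxx hy)) (hdint.mono_set hxx)
      (hhint.mono_set hxx) hlim]

theorem sqrt_add_add_sqrt_mul_sub_sqrt {u l : ℝ} (hu : 0 ≤ u) (hul : 0 ≤ u + l) :
    (√(u + l) + √u) * (√(u + l) - √u) = l := by
  linear_combination sq_sqrt hul - sq_sqrt hu

theorem exponent_gaps_pos_and_mul_eq {σ r lam p s S κ γ : ℝ} (hσ : σ ≠ 0) (hr : 0 ≤ r)
    (hlam : 0 < lam) (hs : s = √(p ^ 2 + 2 * r / σ ^ 2))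
    (hS : S = √(p ^ 2 + 2 * (r + lam) / σ ^ 2)) (hκ : κ = S - s) (hγ : γ = S + s) :
    0 < κ ∧ 0 < γ ∧ γ * κ = lam * (2 / σ ^ 2) := by
  have hu : 0 ≤ p ^ 2 + 2 * r / σ ^ 2 := by positivity
  have hl : 0 < lam * (2 / σ ^ 2) := by positivity
  rw [show p ^ 2 + 2 * (r + lam) / σ ^ 2 = p ^ 2 + 2 * r / σ ^ 2 + lam * (2 / σ ^ 2) by ring]
    at hS
  have hs0 : 0 ≤ s := hs ▸ sqrt_nonneg _
  have hsS : s < S := hs ▸ hS ▸ sqrt_lt_sqrt hu (by linarith)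
  refine ⟨by linarith, by linarith, ?_⟩
  rw [hγ, hκ, hs, hS]
  exact sqrt_add_add_sqrt_mul_sub_sqrt hu (by linarith)

theorem green_combination_eq {lam k γ κ P Q R K X v A B : ℝ} (hγ : γ ≠ 0) (hκ : κ ≠ 0)
    (hγκ : γ + κ ≠ 0) (hlam : γ * κ = lam * k) (hPR : P * R = X) (hQK : Q * K = X) :
    lam * ((γ + κ)⁻¹ * (P * (k * ((R * v - A) / γ)) + Q * (k * (-(K * v + B) / -κ))))
      = X * v + γ / (γ + κ) * Q * B - κ / (γ + κ) * P * A := by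
  linear_combination (norm := skip)
    -(P * (R * v - A) / γ + Q * (K * v + B) / κ) / (γ + κ) * hlam
      + κ * v / (γ + κ) * hPR + γ * v / (γ + κ) * hQK
  field_simp
  ring

theorem resolvent_of_value_above_threshold_general
    (μ σ r lam : ℝ) (hσ : 0 < σ) (hr : 0 < r) (hlam : 0 < lam)
    (p s S b β α κ γ : ℝ)
    (hp : p = 1 / 2 - μ / σ ^ 2)
    (hs : s = Real.sqrt (p ^ 2 + 2 * r / σ ^ 2))
    (hS : S = Real.sqrt (p ^ 2 + 2 * (r + lam) / σ ^ 2))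
    (hb : b = p + s) (hβ : β = p + S) (hα : α = p - S)
    (hκ : κ = S - s) (hγ : γ = S + s)
    (m' : ℝ → ℝ) (hm : ∀ y : ℝ, m' y = 2 / σ ^ 2 * y ^ (2 * μ / σ ^ 2 - 2))
    (xs : ℝ) (hxs : 0 < xs)
    (H : ℝ → ℝ)
    (hHdiff : ContDiffOn ℝ 1 H (Set.Ici xs))
    (h : ℝ → ℝ) (hh : ∀ y : ℝ, h y = H y * y ^ (-b))
    (hint1 : IntegrableOn (fun y => y ^ (-κ) * |deriv h y|) (Set.Ioi xs))
    (hlim : Tendsto (fun y => y ^ (-κ) * h y) atTop (nhds 0))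
    (hint2 : IntegrableOn (fun y => y ^ α * |H y| * m' y) (Set.Ioi xs))
    (V : ℝ → ℝ)
    (hV : ∀ y : ℝ, V y = if y ≤ xs then H xs / xs ^ b * y ^ b else H y)
    (GV : ℝ → ℝ)
    (hGV : ∀ x : ℝ, GV x = (2 * S)⁻¹ *
      (x ^ α * (∫ y in Set.Ioo (0 : ℝ) x, y ^ β * V y * m' y)
        + x ^ β * (∫ y in Set.Ioi x, y ^ α * V y * m' y))) :
    ∀ x : ℝ, xs ≤ x →
      IntegrableOn (fun y => y ^ β * V y * m' y) (Set.Ioo 0 x)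
      ∧ IntegrableOn (fun y => y ^ α * V y * m' y) (Set.Ioi x)
      ∧ IntegrableOn (fun y => y ^ (-κ) * deriv h y) (Set.Ioi x)
      ∧ IntegrableOn (fun y => y ^ γ * deriv h y) (Set.Ioo xs x)
      ∧ lam * GV x
          = H x + γ / (γ + κ) * x ^ β * (∫ y in Set.Ioi x, y ^ (-κ) * deriv h y)
            - κ / (γ + κ) * x ^ α * ∫ y in Set.Ioo xs x, y ^ γ * deriv h y := by
  intro x hx
  have hx0 : 0 < x := hxs.trans_le hx
  obtain ⟨hκ0, hγ0, hγκ⟩ := exponent_gaps_pos_and_mul_eq hσ.ne' hr.le hlam hs hS hκ hγ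
  have hh1 : ContDiffOn ℝ 1 h (Ici xs) :=
    (hHdiff.mul fun y hy => (contDiffAt_rpow_const_of_ne (hxs.trans_le hy).ne').contDiffWithinAt)
      |>.congr fun y _ => hh y
  have hlow_exp : β + b + (2 * μ / σ ^ 2 - 2) = γ - 1 := by rw [hβ, hb, hγ, hp]; ring
  have hup_exp : α + b + (2 * μ / σ ^ 2 - 2) = -κ - 1 := by rw [hα, hb, hκ, hp]; ring
  obtain ⟨hlow_int, hderiv_Ioo, hlow⟩ :=
    integral_Ioo_zero_rpow_mul_value_mul_density hxs hx hγ0 hlow_exp hm hh hV hh1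
  obtain ⟨hup_int, hderiv_Ioi, hup⟩ := integral_Ioi_rpow_mul_value_mul_density hxs hx
    (neg_ne_zero.2 hκ0.ne') (by positivity) hup_exp hm hh hV hh1 hint1 hint2 hlim
  refine ⟨hlow_int, hup_int, hderiv_Ioi, hderiv_Ioo, ?_⟩
  have hH : H x = x ^ b * h x := by
    rw [hh, mul_left_comm, ← rpow_add hx0, add_neg_cancel, rpow_zero, mul_one]
  have hαγ : x ^ α * x ^ γ = x ^ b := by rw [← rpow_add hx0, hα, hγ, hb]; ring_nf
  have hβκ : x ^ β * x ^ (-κ) = x ^ b := by rw [← rpow_add hx0, hβ, hκ, hb]; ring_nf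
  rw [hGV, hlow, hup, hH, show 2 * S = γ + κ by rw [hγ, hκ]; ring]
  exact green_combination_eq hγ0.ne' hκ0.ne' (by positivity) hγκ hαγ hβκ

/-- Above the exercise threshold `x*`, the Green-kernel resolvent at rate `r+λ` of the value
function `V` (a multiple of `y^b` below `x*`, equal to `H` above) satisfies
`λ(GV)(x) = H(x) + (γ/(γ+κ)) x^β ∫_x^∞ y^{−κ}(H(y)y^{−b})' dy
− (κ/(γ+κ)) x^α ∫_{x*}^x y^{γ}(H(y)y^{−b})' dy`. -/
theorem resolvent_of_value_above_threshold
    (μ σ r lam : ℝ) (hσ : 0 < σ) (hr : 0 < r) (hlam : 0 < lam)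
    (p s S b β α κ γ : ℝ)
    (hp : p = 1 / 2 - μ / σ ^ 2)
    (hs : s = Real.sqrt (p ^ 2 + 2 * r / σ ^ 2))
    (hS : S = Real.sqrt (p ^ 2 + 2 * (r + lam) / σ ^ 2))
    (hb : b = p + s) (hβ : β = p + S) (hα : α = p - S)
    (hκ : κ = S - s) (hγ : γ = S + s)
    (m' : ℝ → ℝ) (hm : ∀ y : ℝ, m' y = 2 / σ ^ 2 * y ^ (2 * μ / σ ^ 2 - 2))
    (xs : ℝ) (hxs : 0 < xs)
    (H : ℝ → ℝ)
    (hHcont : ContinuousOn H (Set.Ioi 0))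
    (hHdiff : ContDiffOn ℝ 1 H (Set.Ici xs))
    (h : ℝ → ℝ) (hh : ∀ y : ℝ, h y = H y * y ^ (-b))
    (hint1 : IntegrableOn (fun y => y ^ (-κ) * |deriv h y|) (Set.Ioi xs))
    (hlim : Tendsto (fun y => y ^ (-κ) * h y) atTop (nhds 0))
    (hint2 : IntegrableOn (fun y => y ^ α * |H y| * m' y) (Set.Ioi xs))
    (V : ℝ → ℝ)
    (hV : ∀ y : ℝ, V y = if y ≤ xs then H xs / xs ^ b * y ^ b else H y)
    (GV : ℝ → ℝ)
    (hGV : ∀ x : ℝ, GV x = (2 * S)⁻¹ *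
      (x ^ α * (∫ y in Set.Ioo (0 : ℝ) x, y ^ β * V y * m' y)
        + x ^ β * (∫ y in Set.Ioi x, y ^ α * V y * m' y))) :
    ∀ x : ℝ, xs ≤ x →
      IntegrableOn (fun y => y ^ β * V y * m' y) (Set.Ioo 0 x)
      ∧ IntegrableOn (fun y => y ^ α * V y * m' y) (Set.Ioi x)
      ∧ IntegrableOn (fun y => y ^ (-κ) * deriv h y) (Set.Ioi x)
      ∧ IntegrableOn (fun y => y ^ γ * deriv h y) (Set.Ioo xs x)
      ∧ lam * GV x
          = H x + γ / (γ + κ) * x ^ β * (∫ y in Set.Ioi x, y ^ (-κ) * deriv h y)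
            - κ / (γ + κ) * x ^ α * ∫ y in Set.Ioo xs x, y ^ γ * deriv h y :=
  resolvent_of_value_above_threshold_general μ σ r lam hσ hr hlam p s S b β α κ γ hp hs hS hb hβ hα
    hκ hγ m' hm xs hxs H hHdiff h hh hint1 hlim hint2 V hV GV hGV
end

section
/- In the setting described in the context, the function x ↦ λ(G V)(x) · x^{−b} is differentiable on (0,∞) and for every x > 0 its derivative equals (κγ/(κ+γ)) [ x^{κ−1} ∫_{max(x,x*)}^∞ y^{−κ} (d/dy)( H(y) y^{−b} ) dy + x^{−γ−1} ∫_{x*}^{max(x,x*)} y^{γ} (d/dy)( H(y) y^{−b} ) dy ], where (G V)(x) = (2S)^{-1}[ x^{α} ∫₀^x y^{β} V(y) m'(y) dy + x^{β} ∫_x^∞ y^{α} V(y) m'(y) dy ] with S = √(p² + 2(r+λ)/σ²) (so 2S = β − α). -/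
open Real Set MeasureTheory Filter Topology

/-!
With `g(y) = V(y) y^{-b} = h(max y x*)`, the relations `α - b = -γ`, `β - b = κ` and
`β + b + 2μ/σ² - 2 = γ - 1`, `α + b + 2μ/σ² - 2 = -κ - 1` turn `λ (GV)(x) x^{-b}` into
`κγ/(κ+γ) (x^{-γ} ∫₀ˣ y^{γ-1} g + x^κ ∫ₓ^∞ y^{-κ-1} g)`.
Differentiating in the endpoints, the terms `x^{-γ} x^{γ-1} g(x)` and `x^κ x^{-κ-1} g(x)` cancel,
leaving `-γ x^{-γ-1} ∫₀ˣ y^{γ-1} g + κ x^{κ-1} ∫ₓ^∞ y^{-κ-1} g`. Since `g` is constant below `x*`,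
integrating each integral by parts (with `y^{-κ} h(y) → 0` at infinity) produces the integrals of
`y^{-κ} h'` and `y^γ h'` plus boundary terms `∓ g(x)/x`, which cancel once more.
-/

theorem continuousOn_rpow_const_of_subset_Ioi {s : Set ℝ} (hs : s ⊆ Ioi 0) (q : ℝ) :
    ContinuousOn (fun y : ℝ => y ^ q) s :=
  continuousOn_id.rpow_const fun _ hy => Or.inl (ne_of_gt (hs hy))

theorem integral_Ioo_hasDerivAt_right {f : ℝ → ℝ} {c x : ℝ} (hcx : c < x)
    (hint : IntegrableOn f (Ioc c x)) (hcont : ContinuousOn f (Ioi c)) :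
    HasDerivAt (fun z => ∫ y in Ioo c z, f y) (f x) x := by
  have hderiv := intervalIntegral.integral_hasDerivAt_right
    ((intervalIntegrable_iff_integrableOn_Ioc_of_le hcx.le).2 hint)
    (hcont.stronglyMeasurableAtFilter isOpen_Ioi x hcx)
    (hcont.continuousAt (Ioi_mem_nhds hcx))
  refine hderiv.congr_of_eventuallyEq ?_
  filter_upwards [Ioi_mem_nhds hcx] with z hz
  rw [intervalIntegral.integral_of_le hz.le, integral_Ioc_eq_integral_Ioo]

theorem integral_Ioi_hasDerivAt_left {f : ℝ → ℝ} {c x : ℝ} (hcx : c < x)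
    (hint : IntegrableOn f (Ioi c)) (hcont : ContinuousOn f (Ioi c)) :
    HasDerivAt (fun z => ∫ y in Ioi z, f y) (-f x) x := by
  have hderiv := (intervalIntegral.integral_hasDerivAt_right
    ((intervalIntegrable_iff_integrableOn_Ioc_of_le hcx.le).2
      (hint.mono_set Ioc_subset_Ioi_self))
    (hcont.stronglyMeasurableAtFilter isOpen_Ioi x hcx)
    (hcont.continuousAt (Ioi_mem_nhds hcx))).const_sub (∫ y in Ioi c, f y)
  refine hderiv.congr_of_eventuallyEq ?_
  filter_upwards [Ioi_mem_nhds hcx] with z hz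
  rw [← intervalIntegral.integral_Ioi_sub_Ioi hint hz.le, sub_sub_cancel]

theorem mul_integral_rpow_sub_one {γ : ℝ} (hγ : 0 < γ) (z : ℝ) :
    γ * ∫ y in (0 : ℝ)..z, y ^ (γ - 1) = z ^ γ := by
  rw [integral_rpow (Or.inl (by linarith)), sub_add_cancel, zero_rpow hγ.ne', sub_zero,
    mul_div_cancel₀ _ hγ.ne']

theorem mul_integral_rpow_neg_sub_one {κ x M : ℝ} (hκ : κ ≠ 0) (hx : 0 < x) (hxM : x ≤ M) :
    κ * ∫ y in x..M, y ^ (-κ - 1) = x ^ (-κ) - M ^ (-κ) := by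
  rw [integral_rpow (Or.inr ⟨by contrapose! hκ; linarith, notMem_uIcc_of_lt hx (hx.trans_le hxM)⟩),
    sub_add_cancel]
  field_simp
  ring

noncomputable def greenRatio (κ γ : ℝ) (g : ℝ → ℝ) (z : ℝ) : ℝ :=
  z ^ (-γ) * (∫ y in Ioo 0 z, y ^ (γ - 1) * g y) + z ^ κ * ∫ y in Ioi z, y ^ (-κ - 1) * g y

theorem rpow_mul_mul_const_mul_rpow {y : ℝ} (hy : 0 < y) (q b e C f : ℝ) :
    y ^ q * (f * y ^ b) * (C * y ^ e) = C * (y ^ (q + b + e) * f) := by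
  rw [rpow_add hy, rpow_add hy]
  ring

theorem resolvent_integrals_mul_rpow_eq_greenRatio {μ σ b α β κ γ z : ℝ} {V m' g : ℝ → ℝ}
    (hz : 0 < z) (hm : ∀ y, m' y = 2 / σ ^ 2 * y ^ (2 * μ / σ ^ 2 - 2))
    (hV : ∀ y, 0 < y → V y = g y * y ^ b) (hαb : α - b = -γ) (hβb : β - b = κ)
    (hα : α + b + (2 * μ / σ ^ 2 - 2) = -κ - 1) (hβ : β + b + (2 * μ / σ ^ 2 - 2) = γ - 1) :
    (z ^ α * (∫ y in Ioo 0 z, y ^ β * V y * m' y) + z ^ β * ∫ y in Ioi z, y ^ α * V y * m' y)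
        * z ^ (-b) = 2 / σ ^ 2 * greenRatio κ γ g z := by
  have hweight : ∀ q y, 0 < y → y ^ q * V y * m' y
      = 2 / σ ^ 2 * (y ^ (q + b + (2 * μ / σ ^ 2 - 2)) * g y) := fun q y hy => by
    rw [hV y hy, hm, rpow_mul_mul_const_mul_rpow hy]
  have hlow : ∫ y in Ioo 0 z, y ^ β * V y * m' y
      = 2 / σ ^ 2 * ∫ y in Ioo 0 z, y ^ (γ - 1) * g y := by
    rw [← integral_const_mul]
    exact setIntegral_congr_fun measurableSet_Ioo fun y hy => by rw [hweight β y hy.1, hβ]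
  have hup : ∫ y in Ioi z, y ^ α * V y * m' y
      = 2 / σ ^ 2 * ∫ y in Ioi z, y ^ (-κ - 1) * g y := by
    rw [← integral_const_mul]
    exact setIntegral_congr_fun measurableSet_Ioi fun y hy => by
      rw [hweight α y (hz.trans hy), hα]
  have hα' : z ^ α * z ^ (-b) = z ^ (-γ) := by rw [← rpow_add hz, ← hαb, sub_eq_add_neg]
  have hβ' : z ^ β * z ^ (-b) = z ^ κ := by rw [← rpow_add hz, ← hβb, sub_eq_add_neg]
  rw [greenRatio, hlow, hup, ← hα', ← hβ']
  ring

theorem hasDerivAt_greenRatio {κ γ c x : ℝ} {g : ℝ → ℝ} (hc : 0 ≤ c) (hcx : c < x)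
    (hg : ContinuousOn g (Ioi 0))
    (hlow : IntegrableOn (fun y => y ^ (γ - 1) * g y) (Ioc 0 x))
    (hup : IntegrableOn (fun y => y ^ (-κ - 1) * g y) (Ioi c)) :
    HasDerivAt (greenRatio κ γ g)
      (-γ * x ^ (-γ - 1) * (∫ y in Ioo 0 x, y ^ (γ - 1) * g y)
        + κ * x ^ (κ - 1) * ∫ y in Ioi x, y ^ (-κ - 1) * g y) x := by
  have hcont : ∀ q : ℝ, ContinuousOn (fun y : ℝ => y ^ q * g y) (Ioi 0) := fun q =>
    (continuousOn_rpow_const_of_subset_Ioi subset_rfl q).mul hg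
  have hx : 0 < x := hc.trans_lt hcx
  have hlow' := integral_Ioo_hasDerivAt_right hx hlow (hcont _)
  have hup' := integral_Ioi_hasDerivAt_left hcx hup ((hcont _).mono (Ioi_subset_Ioi hc))
  refine (((hasDerivAt_rpow_const (p := -γ) (Or.inl hx.ne')).mul hlow').add
    ((hasDerivAt_rpow_const (p := κ) (Or.inl hx.ne')).mul hup')).congr_deriv ?_
  have e₁ : x ^ (-γ) * x ^ (γ - 1) = x ^ (-1 : ℝ) := by rw [← rpow_add hx]; ring_nf
  have e₂ : x ^ κ * x ^ (-κ - 1) = x ^ (-1 : ℝ) := by rw [← rpow_add hx]; ring_nf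
  linear_combination g x * e₁ - g x * e₂

section Glued

variable {a κ γ : ℝ} {h h' : ℝ → ℝ}

theorem mul_integral_Ioi_rpow_neg_sub_one_mul_s14 {M : ℝ} (hM : 0 < M)
    (hcont : ContinuousWithinAt h (Ici M) M) (hderiv : ∀ y ∈ Ioi M, HasDerivAt h (h' y) y)
    (hint' : IntegrableOn (fun y => y ^ (-κ) * h' y) (Ioi M))
    (hint : IntegrableOn (fun y => y ^ (-κ - 1) * h y) (Ioi M))
    (hlim : Tendsto (fun y => y ^ (-κ) * h y) atTop (𝓝 0)) :
    κ * ∫ y in Ioi M, y ^ (-κ - 1) * h y = M ^ (-κ) * h M + ∫ y in Ioi M, y ^ (-κ) * h' y := by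
  have hpow : ∀ y ∈ Ioi M, HasDerivAt (fun y : ℝ => y ^ (-κ)) (-κ * y ^ (-κ - 1)) y :=
    fun y hy => hasDerivAt_rpow_const (Or.inl (hM.trans hy).ne')
  have hbdry : Tendsto (fun y => y ^ (-κ) * h y) (𝓝[>] M) (𝓝 (M ^ (-κ) * h M)) :=
    (((continuousAt_rpow_const _ _ (Or.inl hM.ne')).continuousWithinAt.mul hcont).mono
      Ioi_subset_Ici_self).tendsto
  have hint'' : IntegrableOn (fun y => -κ * y ^ (-κ - 1) * h y) (Ioi M) := by
    simpa only [IntegrableOn, mul_assoc] using hint.const_mul (-κ)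
  have hparts := integral_Ioi_mul_deriv_eq_deriv_mul hpow hderiv hint' hint'' hbdry hlim
  simp only [mul_assoc, integral_const_mul] at hparts
  linear_combination -hparts

theorem mul_integral_rpow_sub_one_mul {x : ℝ} (ha : 0 < a) (hax : a ≤ x)
    (hcont : ContinuousOn h (Icc a x)) (hderiv : ∀ y ∈ Ioo a x, HasDerivAt h (h' y) y)
    (hint' : IntegrableOn h' (Ioc a x)) :
    γ * ∫ y in a..x, y ^ (γ - 1) * h y = x ^ γ * h x - a ^ γ * h a - ∫ y in a..x, y ^ γ * h' y := by
  have hpos : Icc a x ⊆ Ioi 0 := fun y hy => ha.trans_le hy.1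
  have hparts := intervalIntegral.integral_mul_deriv_eq_deriv_mul_of_hasDerivAt
    (u := fun y => y ^ γ) (u' := fun y => γ * y ^ (γ - 1))
    (by simpa [uIcc_of_le hax] using continuousOn_rpow_const_of_subset_Ioi hpos γ)
    (by simpa [uIcc_of_le hax] using hcont)
    (fun y hy => hasDerivAt_rpow_const
      (Or.inl (hpos (Ioo_subset_Icc_self (by simpa [hax] using hy))).ne'))
    (by simpa [hax] using hderiv)
    ((continuousOn_rpow_const_of_subset_Ioi hpos _).const_smul γ |>.intervalIntegrable_of_Icc hax)
    ((intervalIntegrable_iff_integrableOn_Ioc_of_le hax).2 hint')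
  simp only [mul_assoc, intervalIntegral.integral_const_mul] at hparts
  linear_combination hparts

theorem continuous_comp_max_of_continuousOn_Ici (hcont : ContinuousOn h (Ici a)) :
    Continuous fun y => h (max y a) :=
  hcont.comp_continuous (continuous_id.max continuous_const) fun y => le_max_right y a

theorem integrableOn_Ioi_rpow_mul_max {c : ℝ} (hc : 0 < c) (hcont : ContinuousOn h (Ici a))
    (hint : IntegrableOn (fun y => y ^ (-κ - 1) * h y) (Ioi a)) :
    IntegrableOn (fun y => y ^ (-κ - 1) * h (max y a)) (Ioi c) := by
  refine IntegrableOn.mono_set (t := Icc c a ∪ Ioi a) (IntegrableOn.union ?_ ?_)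
    fun y hy => (le_or_gt y a).imp (fun hya => ⟨le_of_lt hy, hya⟩) id
  · exact ((continuousOn_rpow_const_of_subset_Ioi (fun y hy => hc.trans_le hy.1) _).mul
      (continuous_comp_max_of_continuousOn_Ici hcont).continuousOn).integrableOn_Icc
  · exact hint.congr_fun (fun y hy => by rw [max_eq_left (le_of_lt hy)]) measurableSet_Ioi

theorem integrableOn_Ioc_of_integrableOn_rpow_mul (ha : 0 < a)
    (hint' : IntegrableOn (fun y => y ^ (-κ) * h' y) (Ioi a)) (x : ℝ) :
    IntegrableOn h' (Ioc a x) := by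
  refine (IntegrableOn.continuousOn_mul_of_subset
    (continuousOn_rpow_const_of_subset_Ioi (fun y hy => ha.trans_le hy.1) κ)
    (hint'.mono_set Ioc_subset_Ioi_self) isCompact_Icc measurableSet_Ioc
    Ioc_subset_Icc_self).congr_fun (fun y hy => ?_) measurableSet_Ioc
  dsimp only
  rw [← mul_assoc, ← rpow_add (ha.trans hy.1), add_neg_cancel, rpow_zero, one_mul]

theorem mul_integral_Ioi_rpow_neg_sub_one_mul_max {x : ℝ} (hx : 0 < x) (hκ : κ ≠ 0)
    (hcont : ContinuousOn h (Ici a)) (hderiv : ∀ y ∈ Ioi a, HasDerivAt h (h' y) y)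
    (hint' : IntegrableOn (fun y => y ^ (-κ) * h' y) (Ioi a))
    (hint : IntegrableOn (fun y => y ^ (-κ - 1) * h y) (Ioi a))
    (hlim : Tendsto (fun y => y ^ (-κ) * h y) atTop (𝓝 0)) :
    κ * ∫ y in Ioi x, y ^ (-κ - 1) * h (max y a)
      = x ^ (-κ) * h (max x a) + ∫ y in Ioi (max x a), y ^ (-κ) * h' y := by
  set M := max x a
  have hxM : x ≤ M := le_max_left x a
  have haM : a ≤ M := le_max_right x a
  have hf := integrableOn_Ioi_rpow_mul_max hx hcont hint
  have hflat : ∫ y in x..M, y ^ (-κ - 1) * h (max y a) = h M * ∫ y in x..M, y ^ (-κ - 1) := by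
    rw [← intervalIntegral.integral_const_mul]
    refine intervalIntegral.integral_congr fun y hy => ?_
    rw [uIcc_of_le hxM] at hy
    rw [le_antisymm (max_le hy.2 haM) (max_le_max_right a hy.1), mul_comm]
  have htail : ∫ y in Ioi M, y ^ (-κ - 1) * h (max y a) = ∫ y in Ioi M, y ^ (-κ - 1) * h y :=
    setIntegral_congr_fun measurableSet_Ioi fun y hy => by
      rw [max_eq_left (haM.trans (le_of_lt hy))]
  have hparts := mul_integral_Ioi_rpow_neg_sub_one_mul_s14 (hx.trans_le hxM)
    ((hcont.mono (Ici_subset_Ici.2 haM)) M self_mem_Ici) (fun y hy => hderiv y (haM.trans_lt hy))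
    (hint'.mono_set (Ioi_subset_Ioi haM)) (hint.mono_set (Ioi_subset_Ioi haM)) hlim
  rw [← intervalIntegral.integral_interval_add_Ioi hf (hf.mono_set (Ioi_subset_Ioi hxM)),
    hflat, htail]
  linear_combination h M * mul_integral_rpow_neg_sub_one hκ hx hxM + hparts

theorem mul_integral_Ioo_rpow_sub_one_mul_max {x : ℝ} (hx : 0 < x) (ha : 0 < a) (hγ : 0 < γ)
    (hcont : ContinuousOn h (Ici a)) (hderiv : ∀ y ∈ Ioi a, HasDerivAt h (h' y) y)
    (hint' : IntegrableOn h' (Ioc a x)) :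
    γ * ∫ y in Ioo 0 x, y ^ (γ - 1) * h (max y a)
      = x ^ γ * h (max x a) - ∫ y in Ioo a (max x a), y ^ γ * h' y := by
  have hI : ∀ u v : ℝ, IntervalIntegrable (fun y => y ^ (γ - 1) * h (max y a)) volume u v :=
    fun _ _ => (intervalIntegral.intervalIntegrable_rpow' (by linarith)).mul_continuousOn
      (continuous_comp_max_of_continuousOn_Ici hcont).continuousOn
  have hflat : ∀ u ≤ a, γ * ∫ y in (0 : ℝ)..u, y ^ (γ - 1) * h (max y a) = h a * u ^ γ := by
    intro u hu
    rw [intervalIntegral.integral_congr (g := fun y => h a * y ^ (γ - 1)) fun y hy => by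
        rw [max_eq_right (hy.2.trans (max_le ha.le hu)), mul_comm],
      intervalIntegral.integral_const_mul, mul_left_comm, mul_integral_rpow_sub_one hγ]
  rw [← integral_Ioc_eq_integral_Ioo, ← intervalIntegral.integral_of_le hx.le]
  rcases le_total x a with hxa | hax
  · rw [max_eq_right hxa, Ioo_self, setIntegral_empty, sub_zero, hflat x hxa, mul_comm]
  · have hright : ∫ y in a..x, y ^ (γ - 1) * h (max y a) = ∫ y in a..x, y ^ (γ - 1) * h y := by
      refine intervalIntegral.integral_congr fun y hy => ?_
      rw [uIcc_of_le hax] at hy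
      rw [max_eq_left hy.1]
    have hparts := mul_integral_rpow_sub_one_mul (γ := γ) ha hax (hcont.mono Icc_subset_Ici_self)
      (fun y hy => hderiv y hy.1) hint'
    rw [max_eq_left hax, ← intervalIntegral.integral_add_adjacent_intervals (hI 0 a) (hI a x),
      hright, ← integral_Ioc_eq_integral_Ioo, ← intervalIntegral.integral_of_le hax]
    linear_combination hflat a le_rfl + hparts

theorem hasDerivAt_greenRatio_max {x : ℝ} (hx : 0 < x) (ha : 0 < a) (hκ : κ ≠ 0) (hγ : 0 < γ)
    (hcont : ContinuousOn h (Ici a)) (hderiv : ∀ y ∈ Ioi a, HasDerivAt h (h' y) y)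
    (hint' : IntegrableOn (fun y => y ^ (-κ) * h' y) (Ioi a))
    (hint : IntegrableOn (fun y => y ^ (-κ - 1) * h y) (Ioi a))
    (hlim : Tendsto (fun y => y ^ (-κ) * h y) atTop (𝓝 0)) :
    HasDerivAt (greenRatio κ γ fun y => h (max y a))
      (x ^ (κ - 1) * (∫ y in Ioi (max x a), y ^ (-κ) * h' y)
        + x ^ (-γ - 1) * ∫ y in Ioo a (max x a), y ^ γ * h' y) x := by
  have hg := continuous_comp_max_of_continuousOn_Ici hcont
  have hlow := mul_integral_Ioo_rpow_sub_one_mul_max hx ha hγ hcont hderiv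
    (integrableOn_Ioc_of_integrableOn_rpow_mul ha hint' x)
  have hup := mul_integral_Ioi_rpow_neg_sub_one_mul_max hx hκ hcont hderiv hint' hint hlim
  have hexp : x ^ (κ - 1) * x ^ (-κ) = x ^ (-γ - 1) * x ^ γ := by
    rw [← rpow_add hx, ← rpow_add hx]; ring_nf
  refine (hasDerivAt_greenRatio (half_pos hx).le (half_lt_self hx) hg.continuousOn
    ((intervalIntegrable_iff_integrableOn_Ioc_of_le hx.le).1
      ((intervalIntegral.intervalIntegrable_rpow' (by linarith)).mul_continuousOn hg.continuousOn))
    (integrableOn_Ioi_rpow_mul_max (half_pos hx) hcont hint)).congr_deriv ?_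
  linear_combination (-x ^ (-γ - 1)) * hlow + x ^ (κ - 1) * hup + h (max x a) * hexp

theorem hasDerivAt_greenRatio_max_of_contDiffOn {x : ℝ} (hx : 0 < x) (ha : 0 < a) (hκ : κ ≠ 0)
    (hγ : 0 < γ) (hdiff : ContDiffOn ℝ 1 h (Ici a))
    (hint' : IntegrableOn (fun y => y ^ (-κ) * |deriv h y|) (Ioi a))
    (hint : IntegrableOn (fun y => y ^ (-κ - 1) * |h y|) (Ioi a))
    (hlim : Tendsto (fun y => y ^ (-κ) * h y) atTop (𝓝 0)) :
    HasDerivAt (greenRatio κ γ fun y => h (max y a))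
      (x ^ (κ - 1) * (∫ y in Ioi (max x a), y ^ (-κ) * deriv h y)
        + x ^ (-γ - 1) * ∫ y in Ioo a (max x a), y ^ γ * deriv h y) x := by
  have hnorm : ∀ q f : ℝ, ∀ y ∈ Ioi a, ‖y ^ q * f‖ = y ^ q * |f| := fun q f y hy => by
    rw [norm_mul, norm_of_nonneg (rpow_nonneg (ha.trans hy).le _), Real.norm_eq_abs]
  refine hasDerivAt_greenRatio_max hx ha hκ hγ hdiff.continuousOn (fun y hy =>
    ((hdiff.differentiableOn one_ne_zero y (Ioi_subset_Ici_self hy)).differentiableAt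
      (Ici_mem_nhds hy)).hasDerivAt) ?_ ?_ hlim
  · refine (integrable_norm_iff ?_).1
      (hint'.congr_fun (fun y hy => (hnorm _ _ y hy).symm) measurableSet_Ioi)
    exact ((measurable_id.pow_const _).mul (measurable_deriv h)).aestronglyMeasurable
  · refine (integrable_norm_iff ?_).1
      (hint.congr_fun (fun y hy => (hnorm _ _ y hy).symm) measurableSet_Ioi)
    exact ((continuousOn_rpow_const_of_subset_Ioi (Ioi_subset_Ioi ha.le) _).mul
      (hdiff.continuousOn.mono Ioi_subset_Ici_self)).aestronglyMeasurable measurableSet_Ioi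

end Glued

theorem sqrt_add_sub_sqrt_pos_and_mul_eq {X d : ℝ} (hX : 0 ≤ X) (hd : 0 < d) :
    0 < √(X + d) - √X ∧ 0 < √(X + d) + √X ∧ (√(X + d) - √X) * (√(X + d) + √X) = d := by
  have hlt : √X < √(X + d) := Real.sqrt_lt_sqrt hX (by linarith)
  refine ⟨sub_pos.2 hlt, by linarith [Real.sqrt_nonneg X], ?_⟩
  linear_combination Real.sq_sqrt (by linarith : 0 ≤ X + d) - Real.sq_sqrt hX

theorem deriv_resolvent_ratio_general
    (μ σ r lam : ℝ) (hσ : 0 < σ) (hr : 0 < r) (hlam : 0 < lam)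
    (p s S b β α κ γ : ℝ)
    (hp : p = 1 / 2 - μ / σ ^ 2)
    (hs : s = Real.sqrt (p ^ 2 + 2 * r / σ ^ 2))
    (hS : S = Real.sqrt (p ^ 2 + 2 * (r + lam) / σ ^ 2))
    (hb : b = p + s) (hβ : β = p + S) (hα : α = p - S)
    (hκ : κ = S - s) (hγ : γ = S + s)
    (m' : ℝ → ℝ) (hm : ∀ y : ℝ, m' y = 2 / σ ^ 2 * y ^ (2 * μ / σ ^ 2 - 2))
    (xs : ℝ) (hxs : 0 < xs)
    (H : ℝ → ℝ)
    (hHdiff : ContDiffOn ℝ 1 H (Set.Ici xs))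
    (h : ℝ → ℝ) (hh : ∀ y : ℝ, h y = H y * y ^ (-b))
    (hint1 : IntegrableOn (fun y => y ^ (-κ) * |deriv h y|) (Set.Ioi xs))
    (hlim : Tendsto (fun y => y ^ (-κ) * h y) atTop (nhds 0))
    (hint2 : IntegrableOn (fun y => y ^ α * |H y| * m' y) (Set.Ioi xs))
    (V : ℝ → ℝ)
    (hV : ∀ y : ℝ, V y = if y ≤ xs then H xs / xs ^ b * y ^ b else H y)
    (GV : ℝ → ℝ)
    (hGV : ∀ x : ℝ, GV x = (2 * S)⁻¹ *
      (x ^ α * (∫ y in Set.Ioo (0 : ℝ) x, y ^ β * V y * m' y)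
        + x ^ β * (∫ y in Set.Ioi x, y ^ α * V y * m' y))) :
    ∀ x : ℝ, 0 < x →
      HasDerivAt (fun z => lam * GV z * z ^ (-b))
        (κ * γ / (κ + γ) *
          (x ^ (κ - 1) * (∫ y in Set.Ioi (max x xs), y ^ (-κ) * deriv h y)
            + x ^ (-γ - 1) * ∫ y in Set.Ioo xs (max x xs), y ^ γ * deriv h y)) x := by
  intro x hx
  obtain ⟨hκ0, hγ0, hκγ⟩ : 0 < κ ∧ 0 < γ ∧ κ * γ = 2 * lam / σ ^ 2 := by
    rw [hκ, hγ, hs, hS, show p ^ 2 + 2 * (r + lam) / σ ^ 2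
      = p ^ 2 + 2 * r / σ ^ 2 + 2 * lam / σ ^ 2 by ring]
    exact sqrt_add_sub_sqrt_pos_and_mul_eq (by positivity) (by positivity)
  have hK : lam * (2 * S)⁻¹ * (2 / σ ^ 2) = κ * γ / (κ + γ) := by
    rw [hκγ, show κ + γ = 2 * S by rw [hκ, hγ]; ring]
    field_simp
  have hHh : ∀ y, 0 < y → H y = h y * y ^ b := fun y hy => by
    rw [hh, mul_assoc, ← rpow_add hy, neg_add_cancel, rpow_zero, mul_one]
  have hVh : ∀ y, 0 < y → V y = h (max y xs) * y ^ b := fun y hy => by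
    rw [hV]
    split_ifs with hyxs
    · rw [max_eq_right hyxs, hh, rpow_neg hxs.le, div_eq_mul_inv]
    · rw [max_eq_left (not_le.1 hyxs).le, hHh y hy]
  have hexpα : α + b + (2 * μ / σ ^ 2 - 2) = -κ - 1 := by rw [hα, hb, hκ, hp]; ring
  have hratio : ∀ z, 0 < z → lam * GV z * z ^ (-b)
      = κ * γ / (κ + γ) * greenRatio κ γ (fun y => h (max y xs)) z := fun z hz => by
    have hnormal := resolvent_integrals_mul_rpow_eq_greenRatio (α := α) (β := β) (κ := κ)
      (γ := γ) hz hm hVh (by rw [hα, hb, hγ]; ring) (by rw [hβ, hb, hκ]; ring) hexpα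
      (by rw [hβ, hb, hγ, hp]; ring)
    rw [hGV, ← hK]
    linear_combination lam * (2 * S)⁻¹ * hnormal
  have hdiff : ContDiffOn ℝ 1 h (Ici xs) := by
    rw [funext hh]
    exact hHdiff.mul (contDiffOn_id.rpow_const_of_ne fun y hy => (hxs.trans_le hy).ne')
  have hint : IntegrableOn (fun y => y ^ (-κ - 1) * |h y|) (Ioi xs) := by
    refine IntegrableOn.congr_fun (hint2.const_mul (σ ^ 2 / 2)) (fun y hy => ?_) measurableSet_Ioi
    have hy0 : 0 < y := hxs.trans hy
    rw [hHh y hy0, abs_mul, abs_of_nonneg (rpow_nonneg hy0.le _), hm,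
      rpow_mul_mul_const_mul_rpow hy0, hexpα]
    field_simp
  refine ((hasDerivAt_greenRatio_max_of_contDiffOn hx hxs hκ0.ne' hγ0 hdiff hint1 hint
    hlim).const_mul _).congr_of_eventuallyEq ?_
  filter_upwards [Ioi_mem_nhds hx] with z hz using hratio z hz

/-- Derivative formula for the ratio `x ↦ λ(GV)(x) x^{−b}`, where `GV` is the Green-kernel
resolvent at rate `r+λ` of the value function `V` (a multiple of `y^b` below the threshold
`x*`, equal to `H` above). -/
theorem deriv_resolvent_ratio
    (μ σ r lam : ℝ) (hσ : 0 < σ) (hr : 0 < r) (hlam : 0 < lam)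
    (p s S b β α κ γ : ℝ)
    (hp : p = 1 / 2 - μ / σ ^ 2)
    (hs : s = Real.sqrt (p ^ 2 + 2 * r / σ ^ 2))
    (hS : S = Real.sqrt (p ^ 2 + 2 * (r + lam) / σ ^ 2))
    (hb : b = p + s) (hβ : β = p + S) (hα : α = p - S)
    (hκ : κ = S - s) (hγ : γ = S + s)
    (m' : ℝ → ℝ) (hm : ∀ y : ℝ, m' y = 2 / σ ^ 2 * y ^ (2 * μ / σ ^ 2 - 2))
    (xs : ℝ) (hxs : 0 < xs)
    (H : ℝ → ℝ)
    (hHcont : ContinuousOn H (Set.Ioi 0))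
    (hHdiff : ContDiffOn ℝ 1 H (Set.Ici xs))
    (h : ℝ → ℝ) (hh : ∀ y : ℝ, h y = H y * y ^ (-b))
    (hint1 : IntegrableOn (fun y => y ^ (-κ) * |deriv h y|) (Set.Ioi xs))
    (hlim : Tendsto (fun y => y ^ (-κ) * h y) atTop (nhds 0))
    (hint2 : IntegrableOn (fun y => y ^ α * |H y| * m' y) (Set.Ioi xs))
    (V : ℝ → ℝ)
    (hV : ∀ y : ℝ, V y = if y ≤ xs then H xs / xs ^ b * y ^ b else H y)
    (GV : ℝ → ℝ)
    (hGV : ∀ x : ℝ, GV x = (2 * S)⁻¹ *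
      (x ^ α * (∫ y in Set.Ioo (0 : ℝ) x, y ^ β * V y * m' y)
        + x ^ β * (∫ y in Set.Ioi x, y ^ α * V y * m' y))) :
    ∀ x : ℝ, 0 < x →
      HasDerivAt (fun z => lam * GV z * z ^ (-b))
        (κ * γ / (κ + γ) *
          (x ^ (κ - 1) * (∫ y in Set.Ioi (max x xs), y ^ (-κ) * deriv h y)
            + x ^ (-γ - 1) * ∫ y in Set.Ioo xs (max x xs), y ^ γ * deriv h y)) x :=
  deriv_resolvent_ratio_general μ σ r lam hσ hr hlam p s S b β α κ γ hp hs hS hb hβ hα hκ hγ m' hm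
    xs hxs H hHdiff h hh hint1 hlim hint2 V hV GV hGV
end

section
/- Let μ ∈ ℝ, σ > 0, r > 0 and λ > 0. Set p = 1/2 − μ/σ², b = p + √(p² + 2r/σ²), β = p + √(p² + 2(r+λ)/σ²), α = p − √(p² + 2(r+λ)/σ²), B = β − α, and m'(y) = (2/σ²) y^{2μ/σ² − 2}. Let f : (0,∞) → [0,∞) be continuous and such that for every x > 0 the integrals ∫₀^x y^{β} f(y) m'(y) dy, ∫_x^∞ y^{α} f(y) m'(y) dy and ∫₀^x y^{b} f(y) m'(y) dy are finite, and define (G f)(x) = B^{-1}[ x^{α} ∫₀^x y^{β} f(y) m'(y) dy + x^{β} ∫_x^∞ y^{α} f(y) m'(y) dy ]. If λ(G f)(x) ≤ f(x) for all x > 0, then the function x ↦ λ(G f)(x) · x^{−b} is non-increasing on (0,∞). -/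
/-!
Write `φ = f m'`, `I x = ∫_{(0,x)} y^β φ` and `J x = ∫_{(x,∞)} y^α φ`, so that
`B G = x^α I + x^β J`. The ratio `(x^α I + x^β J) x^(-b)` has slope `x^(α+β-2b-1) W x`, where
`W = (α-b) x^(b-β) I + (β-b) x^(b-α) J`, and
`W' = x^b ((β-b)(b-α) x^(-1-α-β) B G - B φ) = B x^b m' (λ G - f) ≤ 0`
because `(β-b)(b-α) = 2λ/σ²` and `m' = (2/σ²) x^(-1-α-β)`. As `α < b < β` and `y^b φ` is
integrable near `0`, both terms of `W` vanish at `0⁺` (the first since `y^β ≤ x^(β-b) y^b` on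
`(0,x)`, the second by dominated convergence). Hence `W ≤ 0` and the ratio is antitone.
-/

open Real Set MeasureTheory Filter Topology

theorem hasDerivAt_setIntegral_Ioo {g : ℝ → ℝ} {a c x : ℝ} (hg : IntegrableOn g (Ioo a c))
    (hcont : ContinuousOn g (Ioo a c)) (hx : x ∈ Ioo a c) :
    HasDerivAt (fun t => ∫ y in Ioo a t, g y) (g x) x := by
  have hgx : IntervalIntegrable g volume a x :=
    (intervalIntegrable_iff_integrableOn_Ioo_of_le hx.1.le).2
      (hg.mono_set (Ioo_subset_Ioo_right hx.2.le))
  refine (intervalIntegral.integral_hasDerivAt_right hgx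
    (hcont.stronglyMeasurableAtFilter isOpen_Ioo x hx)
    (hcont.continuousAt (isOpen_Ioo.mem_nhds hx))).congr_of_eventuallyEq ?_
  filter_upwards [Ioi_mem_nhds hx.1] with t ht
  rw [intervalIntegral.integral_of_le ht.le, integral_Ioc_eq_integral_Ioo]

theorem hasDerivAt_setIntegral_Ioi {g : ℝ → ℝ} {a x : ℝ} (hg : IntegrableOn g (Ioi a))
    (hcont : ContinuousOn g (Ioi a)) (hx : a < x) :
    HasDerivAt (fun t => ∫ y in Ioi t, g y) (-g x) x := by
  have hgx : IntervalIntegrable g volume a x :=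
    (intervalIntegrable_iff_integrableOn_Ioc_of_le hx.le).2 (hg.mono_set Ioc_subset_Ioi_self)
  refine ((intervalIntegral.integral_hasDerivAt_right hgx
    (hcont.stronglyMeasurableAtFilter isOpen_Ioi x hx) (hcont.continuousAt (Ioi_mem_nhds hx))
    ).const_sub (∫ y in Ioi a, g y)).congr_of_eventuallyEq ?_
  filter_upwards [Ioi_mem_nhds hx] with t ht
  rw [← intervalIntegral.integral_Ioi_sub_Ioi hg ht.le, sub_sub_cancel]

theorem tendsto_setIntegral_Ioo_nhdsGT {g : ℝ → ℝ} {a c : ℝ} (hac : a < c)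
    (hg : IntegrableOn g (Ioo a c)) :
    Tendsto (fun x => ∫ y in Ioo a x, g y) (𝓝[>] a) (𝓝 0) := by
  have hg' : IntegrableOn g (uIcc a c) := by
    rw [uIcc_of_le hac.le]
    exact (integrableOn_Icc_iff_integrableOn_Ioo).2 hg
  have hcont := intervalIntegral.continuousOn_primitive_interval hg' a left_mem_uIcc
  rw [uIcc_of_le hac.le] at hcont
  have hlim : Tendsto (fun x => ∫ y in a..x, g y) (𝓝[>] a) (𝓝 0) := by
    simpa using hcont.tendsto.mono_left
      ((nhdsWithin_Ioo_eq_nhdsGT hac).symm.le.trans (nhdsWithin_mono _ Ioo_subset_Icc_self))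
  refine hlim.congr' ?_
  filter_upwards [self_mem_nhdsWithin] with x hx
  rw [intervalIntegral.integral_of_le (le_of_lt hx), integral_Ioc_eq_integral_Ioo]

theorem tendsto_rpow_mul_setIntegral_Ioo {φ : ℝ → ℝ} {b β : ℝ} (hbβ : b ≤ β)
    (hφ : ∀ y ∈ Ioo (0 : ℝ) 1, 0 ≤ φ y)
    (hint : IntegrableOn (fun y => y ^ b * φ y) (Ioo 0 1)) :
    Tendsto (fun x => x ^ (b - β) * ∫ y in Ioo 0 x, y ^ β * φ y) (𝓝[>] 0) (𝓝 0) := by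
  have hintegrand_nonneg {x y : ℝ} (hx : x ∈ Ioo (0 : ℝ) 1) (hy : y ∈ Ioo 0 x) : 0 ≤ y ^ β * φ y :=
    mul_nonneg (rpow_nonneg hy.1.le _) (hφ y ⟨hy.1, hy.2.trans hx.2⟩)
  refine tendsto_of_tendsto_of_tendsto_of_le_of_le' tendsto_const_nhds
    (tendsto_setIntegral_Ioo_nhdsGT one_pos hint) ?_ ?_
  · filter_upwards [Ioo_mem_nhdsGT one_pos] with x hx
    exact mul_nonneg (rpow_nonneg hx.1.le _)
      (setIntegral_nonneg measurableSet_Ioo fun y hy => hintegrand_nonneg hx hy)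
  · filter_upwards [Ioo_mem_nhdsGT one_pos] with x hx
    rw [← integral_const_mul]
    refine integral_mono_of_nonneg ?_ (hint.mono_set (Ioo_subset_Ioo_right hx.2.le)) ?_ <;>
      refine (ae_restrict_iff' measurableSet_Ioo).2 (Eventually.of_forall fun y hy => ?_)
    · exact mul_nonneg (rpow_nonneg hx.1.le _) (hintegrand_nonneg hx hy)
    · calc x ^ (b - β) * (y ^ β * φ y) ≤ y ^ (b - β) * (y ^ β * φ y) :=
            mul_le_mul_of_nonneg_right (rpow_le_rpow_of_nonpos hy.1 hy.2.le (by linarith))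
              (hintegrand_nonneg hx hy)
        _ = y ^ b * φ y := by rw [← mul_assoc, ← rpow_add hy.1, sub_add_cancel]

theorem tendsto_rpow_mul_setIntegral_Ioi {φ : ℝ → ℝ} {α b : ℝ} (hαb : α < b)
    (hφ : ∀ y ∈ Ioo (0 : ℝ) 1, 0 ≤ φ y)
    (hint : IntegrableOn (fun y => y ^ b * φ y) (Ioo 0 1))
    (hint_Ioi : ∀ x > 0, IntegrableOn (fun y => y ^ α * φ y) (Ioi x)) :
    Tendsto (fun x => x ^ (b - α) * ∫ y in Ioi x, y ^ α * φ y) (𝓝[>] 0) (𝓝 0) := by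
  have hpow : Tendsto (fun x : ℝ => x ^ (b - α)) (𝓝[>] 0) (𝓝 0) := by
    simpa [zero_rpow (sub_pos.2 hαb).ne'] using
      (continuousAt_rpow_const 0 _ (Or.inr (sub_pos.2 hαb).le)).tendsto.mono_left
        nhdsWithin_le_nhds
  have hnear : Tendsto (fun x => ∫ y in Ioo 0 1, (Ioi x).indicator
      (fun y => x ^ (b - α) * (y ^ α * φ y)) y) (𝓝[>] 0) (𝓝 0) := by
    suffices h : Tendsto (fun x => ∫ y in Ioo 0 1, (Ioi x).indicator
        (fun y => x ^ (b - α) * (y ^ α * φ y)) y) (𝓝[>] 0)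
        (𝓝 (∫ _ in Ioo (0 : ℝ) 1, (0 : ℝ))) by
      simpa using h
    refine tendsto_integral_filter_of_dominated_convergence _ ?_ ?_ hint ?_
    · filter_upwards [self_mem_nhdsWithin] with x hx
      refine (aestronglyMeasurable_indicator_iff measurableSet_Ioi).2 ?_
      rw [Measure.restrict_restrict measurableSet_Ioi]
      exact (((hint_Ioi x hx).aestronglyMeasurable.const_mul _).mono_measure
        (Measure.restrict_mono inter_subset_left le_rfl))
    · filter_upwards [Ioo_mem_nhdsGT one_pos] with x hx
      refine (ae_restrict_iff' measurableSet_Ioo).2 (Eventually.of_forall fun y hy => ?_)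
      have hφy : 0 ≤ y ^ α * φ y := mul_nonneg (rpow_nonneg hy.1.le _) (hφ y hy)
      rw [indicator_apply]
      split_ifs with hxy
      · rw [norm_of_nonneg (mul_nonneg (rpow_nonneg hx.1.le _) hφy)]
        calc x ^ (b - α) * (y ^ α * φ y) ≤ y ^ (b - α) * (y ^ α * φ y) :=
              mul_le_mul_of_nonneg_right (rpow_le_rpow hx.1.le (le_of_lt hxy) (by linarith)) hφy
          _ = y ^ b * φ y := by rw [← mul_assoc, ← rpow_add hy.1, sub_add_cancel]
      · simpa using mul_nonneg (rpow_nonneg hy.1.le b) (hφ y hy)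
    · refine (ae_restrict_iff' measurableSet_Ioo).2 (Eventually.of_forall fun y hy => ?_)
      have hlim := hpow.mul_const (y ^ α * φ y)
      rw [zero_mul] at hlim
      refine hlim.congr' ?_
      filter_upwards [Ioo_mem_nhdsGT hy.1] with x hx
      exact (indicator_of_mem (mem_Ioi.2 hx.2) (fun y => x ^ (b - α) * (y ^ α * φ y))).symm
  have hsplit : ∀ x ∈ Ioo (0 : ℝ) 1, x ^ (b - α) * ∫ y in Ioi x, y ^ α * φ y =
      (∫ y in Ioo 0 1, (Ioi x).indicator (fun y => x ^ (b - α) * (y ^ α * φ y)) y)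
        + x ^ (b - α) * ∫ y in Ioi 1, y ^ α * φ y := by
    intro x hx
    rw [setIntegral_indicator measurableSet_Ioi, Ioo_inter_Ioi, max_eq_right hx.1.le,
      integral_const_mul, ← integral_Ioc_eq_integral_Ioo, ← mul_add,
      ← intervalIntegral.integral_of_le hx.2.le, intervalIntegral.integral_interval_add_Ioi
        (hint_Ioi x hx.1) (hint_Ioi 1 one_pos)]
  have hlim := hnear.add (hpow.mul_const (∫ y in Ioi 1, y ^ α * φ y))
  rw [zero_mul, add_zero] at hlim
  refine hlim.congr' ?_
  filter_upwards [Ioo_mem_nhdsGT one_pos] with x hx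
  exact (hsplit x hx).symm

theorem antitoneOn_Ioi_of_hasDerivAt_nonpos {F F' : ℝ → ℝ} {a : ℝ}
    (hF : ∀ x > a, HasDerivAt F (F' x) x) (hF' : ∀ x > a, F' x ≤ 0) : AntitoneOn F (Ioi a) :=
  antitoneOn_of_hasDerivWithinAt_nonpos (convex_Ioi a)
    (fun x hx => (hF x hx).continuousAt.continuousWithinAt)
    (fun x hx => (hF x (interior_subset hx)).hasDerivWithinAt)
    (fun x hx => hF' x (interior_subset hx))

theorem AntitoneOn.nonpos_of_tendsto_nhdsGT {W : ℝ → ℝ} {a x : ℝ}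
    (hW : AntitoneOn W (Ioi a))
    (hlim : Tendsto W (𝓝[>] a) (𝓝 0)) (hx : a < x) : W x ≤ 0 :=
  ge_of_tendsto hlim (by filter_upwards [Ioo_mem_nhdsGT hx] with t ht using hW ht.1 hx ht.2.le)

theorem sqrt_roots_interlace {p c d b β α : ℝ} (hc : 0 ≤ c) (hcd : c < d)
    (hb : b = p + √(p ^ 2 + c)) (hβ : β = p + √(p ^ 2 + d)) (hα : α = p - √(p ^ 2 + d)) :
    α < b ∧ b < β ∧ (β - b) * (b - α) = d - c := by
  have hlt : √(p ^ 2 + c) < √(p ^ 2 + d) := sqrt_lt_sqrt (by positivity) (by linarith)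
  have hsqrt_nonneg := sqrt_nonneg (p ^ 2 + c)
  subst hb hβ hα
  refine ⟨by linarith, by linarith, ?_⟩
  linear_combination sq_sqrt (show 0 ≤ p ^ 2 + d by nlinarith [sq_nonneg p])
    - sq_sqrt (show 0 ≤ p ^ 2 + c by positivity)

noncomputable def greenPotential (α β : ℝ) (φ : ℝ → ℝ) (x : ℝ) : ℝ :=
  x ^ α * (∫ y in Ioo 0 x, y ^ β * φ y) + x ^ β * ∫ y in Ioi x, y ^ α * φ y

noncomputable def scaledRatioSlope (α b β : ℝ) (I J : ℝ → ℝ) (x : ℝ) : ℝ :=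
  (α - b) * (x ^ (b - β) * I x) + (β - b) * (x ^ (b - α) * J x)

section RatioDerivatives

variable {α b β x φx : ℝ} {I J : ℝ → ℝ}

theorem hasDerivAt_potentialRatio (hx : 0 < x) (hI : HasDerivAt I (x ^ β * φx) x)
    (hJ : HasDerivAt J (-(x ^ α * φx)) x) :
    HasDerivAt (fun t => (t ^ α * I t + t ^ β * J t) * t ^ (-b))
      (x ^ (α - b + (β - b) - 1) * scaledRatioSlope α b β I J x) x := by
  have h := ((((hasDerivAt_rpow_const (p := α) (Or.inl hx.ne')).mul hI).add
    ((hasDerivAt_rpow_const (p := β) (Or.inl hx.ne')).mul hJ)).mul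
      (hasDerivAt_rpow_const (p := -b) (Or.inl hx.ne')))
  refine h.congr_deriv ?_
  have hxα : x ^ α ≠ 0 := (rpow_pos_of_pos hx α).ne'
  have hxβ : x ^ β ≠ 0 := (rpow_pos_of_pos hx β).ne'
  have hxb : x ^ b ≠ 0 := (rpow_pos_of_pos hx b).ne'
  simp only [scaledRatioSlope, Pi.add_apply, Pi.mul_apply, rpow_sub hx, rpow_add hx,
    rpow_neg hx.le, rpow_one]
  field_simp
  ring

theorem hasDerivAt_scaledRatioSlope (hx : 0 < x) (hI : HasDerivAt I (x ^ β * φx) x)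
    (hJ : HasDerivAt J (-(x ^ α * φx)) x) :
    HasDerivAt (scaledRatioSlope α b β I J)
      (x ^ b * ((β - b) * (b - α) * x ^ (-1 - (α + β)) * (x ^ α * I x + x ^ β * J x)
        - (β - α) * φx)) x := by
  have h := (((hasDerivAt_rpow_const (p := b - β) (Or.inl hx.ne')).mul hI).const_mul (α - b)).add
    (((hasDerivAt_rpow_const (p := b - α) (Or.inl hx.ne')).mul hJ).const_mul (β - b))
  refine h.congr_deriv ?_
  have hxα : x ^ α ≠ 0 := (rpow_pos_of_pos hx α).ne'
  have hxβ : x ^ β ≠ 0 := (rpow_pos_of_pos hx β).ne'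
  have hxb : x ^ b ≠ 0 := (rpow_pos_of_pos hx b).ne'
  simp only [rpow_sub hx, rpow_add hx, rpow_neg hx.le, rpow_one]
  field_simp
  ring

end RatioDerivatives

theorem antitoneOn_greenPotential_mul_rpow_neg {α b β : ℝ} {φ : ℝ → ℝ} (hαb : α < b)
    (hbβ : b < β) (hφ_cont : ContinuousOn φ (Ioi 0)) (hφ_nonneg : ∀ y > 0, 0 ≤ φ y)
    (hint_Ioo : ∀ x > 0, IntegrableOn (fun y => y ^ β * φ y) (Ioo 0 x))
    (hint_Ioi : ∀ x > 0, IntegrableOn (fun y => y ^ α * φ y) (Ioi x))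
    (hint_b : IntegrableOn (fun y => y ^ b * φ y) (Ioo 0 1))
    (hexcessive : ∀ x > 0,
      (β - b) * (b - α) * x ^ (-1 - (α + β)) * greenPotential α β φ x ≤ (β - α) * φ x) :
    AntitoneOn (fun x => greenPotential α β φ x * x ^ (-b)) (Ioi 0) := by
  let I := fun x => ∫ y in Ioo 0 x, y ^ β * φ y
  let J := fun x => ∫ y in Ioi x, y ^ α * φ y
  have hcont (c : ℝ) : ContinuousOn (fun y => y ^ c * φ y) (Ioi 0) :=
    (continuousOn_id.rpow_const fun y hy => Or.inl (ne_of_gt hy)).mul hφ_cont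
  have hI (x : ℝ) (hx : 0 < x) : HasDerivAt I (x ^ β * φ x) x :=
    hasDerivAt_setIntegral_Ioo (hint_Ioo (x + 1) (by linarith))
      ((hcont β).mono Ioo_subset_Ioi_self) ⟨hx, by linarith⟩
  have hJ (x : ℝ) (hx : 0 < x) : HasDerivAt J (-(x ^ α * φ x)) x :=
    hasDerivAt_setIntegral_Ioi (hint_Ioi (x / 2) (by positivity))
      ((hcont α).mono (Ioi_subset_Ioi (by positivity))) (by linarith)
  have hslope_anti : AntitoneOn (scaledRatioSlope α b β I J) (Ioi 0) :=
    antitoneOn_Ioi_of_hasDerivAt_nonpos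
      (fun x hx => hasDerivAt_scaledRatioSlope hx (hI x hx) (hJ x hx))
      (fun x hx => mul_nonpos_of_nonneg_of_nonpos (rpow_nonneg (le_of_lt hx) b)
        (sub_nonpos.2 (hexcessive x hx)))
  have hslope_lim : Tendsto (scaledRatioSlope α b β I J) (𝓝[>] 0) (𝓝 0) := by
    have hφ : ∀ y ∈ Ioo (0 : ℝ) 1, 0 ≤ φ y := fun y hy => hφ_nonneg y hy.1
    have h := ((tendsto_rpow_mul_setIntegral_Ioo hbβ.le hφ hint_b).const_mul (α - b)).add
      ((tendsto_rpow_mul_setIntegral_Ioi hαb hφ hint_b hint_Ioi).const_mul (β - b))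
    rwa [mul_zero, mul_zero, add_zero] at h
  exact antitoneOn_Ioi_of_hasDerivAt_nonpos
    (fun x hx => hasDerivAt_potentialRatio hx (hI x hx) (hJ x hx))
    (fun x hx => mul_nonpos_of_nonneg_of_nonpos (rpow_nonneg (le_of_lt hx) _)
      (hslope_anti.nonpos_of_tendsto_nhdsGT hslope_lim hx))

/-- For geometric Brownian motion, if `f` is continuous, nonnegative and satisfies
`λ(Gf) ≤ f` (as holds for `r`-excessive functions), where `G` is the Green-kernel resolvent
at rate `r+λ`, then the ratio `x ↦ λ(Gf)(x) / x^b` is non-increasing on `(0,∞)`. -/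
theorem resolvent_ratio_antitone
    (μ σ r lam : ℝ) (hσ : 0 < σ) (hr : 0 < r) (hlam : 0 < lam)
    (p b β α B : ℝ)
    (hp : p = 1 / 2 - μ / σ ^ 2)
    (hb : b = p + Real.sqrt (p ^ 2 + 2 * r / σ ^ 2))
    (hβ : β = p + Real.sqrt (p ^ 2 + 2 * (r + lam) / σ ^ 2))
    (hα : α = p - Real.sqrt (p ^ 2 + 2 * (r + lam) / σ ^ 2))
    (hB : B = β - α)
    (m' : ℝ → ℝ) (hm : ∀ y : ℝ, m' y = 2 / σ ^ 2 * y ^ (2 * μ / σ ^ 2 - 2))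
    (f : ℝ → ℝ)
    (hfcont : ContinuousOn f (Set.Ioi 0))
    (hfnonneg : ∀ x : ℝ, 0 < x → 0 ≤ f x)
    (hint : ∀ x : ℝ, 0 < x →
      IntegrableOn (fun y => y ^ β * f y * m' y) (Set.Ioo 0 x)
      ∧ IntegrableOn (fun y => y ^ α * f y * m' y) (Set.Ioi x)
      ∧ IntegrableOn (fun y => y ^ b * f y * m' y) (Set.Ioo 0 x))
    (G : ℝ → ℝ)
    (hG : ∀ x : ℝ, G x = B⁻¹ *
      (x ^ α * (∫ y in Set.Ioo (0 : ℝ) x, y ^ β * f y * m' y)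
        + x ^ β * (∫ y in Set.Ioi x, y ^ α * f y * m' y)))
    (hle : ∀ x : ℝ, 0 < x → lam * G x ≤ f x) :
    AntitoneOn (fun x => lam * G x * x ^ (-b)) (Set.Ioi 0) := by
  obtain ⟨hαb, hbβ, hgap⟩ := sqrt_roots_interlace (by positivity)
    (by gcongr; linarith : 2 * r / σ ^ 2 < 2 * (r + lam) / σ ^ 2) hb hβ hα
  have hB_pos : 0 < B := by linarith
  have hm_rpow (y : ℝ) : m' y = 2 / σ ^ 2 * y ^ (-1 - (α + β)) := by
    rw [hm y, hα, hβ, hp]; ring_nf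
  have hm_nonneg (y : ℝ) (hy : 0 < y) : 0 ≤ m' y := by rw [hm y]; positivity
  have hm_cont : ContinuousOn m' (Ioi 0) :=
    (continuousOn_const.mul (continuousOn_id.rpow_const fun y hy => Or.inl (ne_of_gt hy))).congr
      fun y _ => hm_rpow y
  have hG_eq (x : ℝ) : G x = B⁻¹ * greenPotential α β (fun y => f y * m' y) x := by
    simp only [hG, greenPotential, mul_assoc]
  have hexcessive (x : ℝ) (hx : 0 < x) : (β - b) * (b - α) * x ^ (-1 - (α + β)) *
      greenPotential α β (fun y => f y * m' y) x ≤ (β - α) * (f x * m' x) :=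
    calc _ = B * (lam * G x * m' x) := by rw [hG_eq, hm_rpow, hgap]; field_simp; ring
      _ ≤ B * (f x * m' x) :=
        mul_le_mul_of_nonneg_left (mul_le_mul_of_nonneg_right (hle x hx) (hm_nonneg x hx)) hB_pos.le
      _ = (β - α) * (f x * m' x) := by rw [hB]
  have hratio := antitoneOn_greenPotential_mul_rpow_neg (φ := fun y => f y * m' y) hαb hbβ
    (hfcont.mul hm_cont)
    (fun y hy => mul_nonneg (hfnonneg y hy) (hm_nonneg y hy))
    (fun x hx => by simpa only [mul_assoc] using (hint x hx).1)
    (fun x hx => by simpa only [mul_assoc] using (hint x hx).2.1)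
    (by simpa only [mul_assoc] using (hint 1 one_pos).2.2) hexcessive
  intro x hx y hy hxy
  simp only [hG_eq, mul_assoc]
  exact mul_le_mul_of_nonneg_left (mul_le_mul_of_nonneg_left (hratio hx hy hxy)
    (inv_nonneg.2 hB_pos.le)) hlam.le
end
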